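/- Let Ĉ_N(t, s_1, θ_1) = γ_N(θ_1)·∫_0^t (1 − (N/(N−1))·∫ C(ŝ_N(τ, s_1, θ_1), s', |x_1 − x'|) dμ̂_N^{s,x}(τ)(s', x'))·e^{γ_N(θ_1)(τ−t)} dτ with γ_N(θ) = γ(1 − log(S/s_m)/(2(N−1)R_M)), and let C_∞(t, s_2, θ_2) = γ_2·∫_0^t (1 − ∫ C(s_∞(τ, s_2, θ_2), s', |x_2 − x'|) dμ_∞^{s,x}(τ)(s', x'))·e^{γ_2(τ−t)} dτ be the corresponding mean-field accumulated competition. Then for all t ≥ 0: |Ĉ_N(t, s_1, θ_1) − C_∞(t, s_2, θ_2)| ≤ γ_1 t·log(S_1/s_m)/(2R_M(N−1)) + t·|γ_1 − γ_2| + 1/(N−1) + γ_2·∫_0^t | ∫ C(ŝ_N(τ,s_1,θ_1), s', |x_1−x'|) dμ̂_N^{s,x}(τ) − ∫ C(s_∞(τ,s_2,θ_2), s', |x_2−x'|) dμ_∞^{s,x}(τ) |·e^{γ_2(τ−t)} dτ. -/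

import Mathlib

open MeasureTheory Set
open scoped ENNReal

/-- The pairwise competition potential
`C(s, s', d) = log(s'/s_m) / (2 R_M (1 + d²/σ_x²)) · (1 + tanh(log(s'/s)/σ_r))`. -/
noncomputable def pot (sm RM σx σr s s' d : ℝ) : ℝ :=
  Real.log (s' / sm) / (2 * RM * (1 + d ^ 2 / σx ^ 2)) *
    (1 + Real.tanh (Real.log (s' / s) / σr))

/-- The state space `Z = ℝ₊* × Θ` encoded inside `ℝ × ℝ² × ℝ × ℝ`; a point is
`z = (s, x, S, γ)`. -/
abbrev Zst : Type := ℝ × EuclideanSpace ℝ (Fin 2) × ℝ × ℝ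

/-- The competition index `C_i^N(t) = (1/(N-1)) Σ_{j≠i} C(s_i(t), s_j(t), |x_i - x_j|)` of a
population with initial configuration `cfg` and size trajectories `s`. -/
noncomputable def cIdx (sm RM σx σr : ℝ) {N : ℕ} (cfg : Fin N → Zst)
    (s : Fin N → ℝ → ℝ) (i : Fin N) (t : ℝ) : ℝ :=
  (1 / ((N : ℝ) - 1)) *
    ∑ j ∈ Finset.univ.erase i,
      pot sm RM σx σr (s i t) (s j t) (dist (cfg i).2.1 (cfg j).2.1)

/-- `s` is a global solution of the competition system associated with the configuration
`cfg = (s_i^0, x_i, S_i, γ_i)_i`. -/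
def IsCompetitionSol (sm RM σx σr : ℝ) {N : ℕ} (cfg : Fin N → Zst)
    (s : Fin N → ℝ → ℝ) : Prop :=
  ∀ i, s i 0 = (cfg i).1 ∧ ∀ t, 0 ≤ t →
    HasDerivWithinAt (s i)
      ((cfg i).2.2.2 * s i t * (Real.log ((cfg i).2.2.1 / sm) *
          (1 - cIdx sm RM σx σr cfg s i t)
        - Real.log (s i t / sm)))
      (Set.Ici 0) t

/-- Admissibility of an initial configuration: sizes in `(s_0^{min}, s_0^{max})`, asymptotic
sizes in `(S_m, s_m e^{R_M})`, growth rates in `[0, γ_M]`. -/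
def AdmissibleCfg (sm RM γM s0min s0max SM : ℝ) {N : ℕ} (cfg : Fin N → Zst) : Prop :=
  ∀ i, s0min < (cfg i).1 ∧ (cfg i).1 < s0max ∧
    SM < (cfg i).2.2.1 ∧ (cfg i).2.2.1 < sm * Real.exp RM ∧
    0 ≤ (cfg i).2.2.2 ∧ (cfg i).2.2.2 ≤ γM

/-- The population empirical measure `μ̂_N(t) = (1/N) Σ_i δ_{(s_i(t), θ_i)}`. -/
noncomputable def empCfg {N : ℕ} (cfg : Fin N → Zst) (s : Fin N → ℝ → ℝ) (t : ℝ) :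
    Measure Zst :=
  (N : ℝ≥0∞)⁻¹ • ∑ i : Fin N, Measure.dirac (s i t, (cfg i).2)

/-- The mean-field flow property: for every admissible `(s_0, θ)`, `t ↦ f t s_0 x S γ` starts
at `s_0`, stays positive and solves the mean-field growth equation driven by `μ0`. -/
def IsMeanFieldFlow (sm RM σx σr γM : ℝ) (μ0 : Measure Zst)
    (f : ℝ → ℝ → EuclideanSpace ℝ (Fin 2) → ℝ → ℝ → ℝ) : Prop :=
  ∀ (s0 : ℝ) (x : EuclideanSpace ℝ (Fin 2)) (S γ : ℝ),
    0 < s0 → sm ≤ S → S ≤ sm * Real.exp RM → 0 ≤ γ → γ ≤ γM →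
    f 0 s0 x S γ = s0 ∧
    (∀ t, 0 ≤ t → 0 < f t s0 x S γ) ∧
    (∀ t, 0 ≤ t →
      HasDerivWithinAt (fun τ => f τ s0 x S γ)
        (γ * f t s0 x S γ * (Real.log (S / sm) *
            (1 - ∫ z, pot sm RM σx σr (f t s0 x S γ)
                  (f t z.1 z.2.1 z.2.2.1 z.2.2.2) (dist x z.2.1) ∂μ0)
          - Real.log (f t s0 x S γ / sm)))
        (Set.Ici 0) t)

/-- The metric `m_Z` on `Z`:
`m_Z(z_1, z_2) = |s_1 − s_2|/s_m + |S_1 − S_2|/s_m + |x_1 − x_2|/ℓ + τ_r |γ_1 − γ_2|`. -/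
noncomputable def mZ (sm ℓ τr : ℝ) (z1 z2 : Zst) : ℝ :=
  |z1.1 - z2.1| / sm + |z1.2.2.1 - z2.2.2.1| / sm + dist z1.2.1 z2.2.1 / ℓ +
    τr * |z1.2.2.2 - z2.2.2.2|

/-- 1-Wasserstein distance for a cost `m`: infimum over couplings of `∬ m dπ`. -/
noncomputable def Wass1 {α : Type*} [MeasurableSpace α] (m : α → α → ℝ)
    (μ ν : Measure α) : ℝ :=
  sInf {v : ℝ | ∃ π : Measure (α × α),
    Measure.map Prod.fst π = μ ∧ Measure.map Prod.snd π = ν ∧ v = ∫ q, m q.1 q.2 ∂π}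

/-- Individual parameters `θ = (x, S, γ)`. -/
abbrev Param : Type := EuclideanSpace ℝ (Fin 2) × ℝ × ℝ

/-- The mean competition potential
`Ĉ_N(s, x, μ) = (N/(N−1)) ∫ C(s, s', |x−x'|) dμ^{s,x} − C(s,s,0)/(N−1)`. -/
noncomputable def hatC (sm RM σx σr : ℝ) (N : ℕ) (s : ℝ) (x : EuclideanSpace ℝ (Fin 2))
    (μ : Measure Zst) : ℝ :=
  ((N : ℝ) / ((N : ℝ) - 1)) * (∫ z, pot sm RM σx σr s z.1 (dist x z.2.1) ∂μ)
    - pot sm RM σx σr s s 0 / ((N : ℝ) - 1)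

/-- The corrected growth rate `γ_N(θ) = γ (1 − log(S/s_m)/(2(N−1)R_M))`. -/
noncomputable def gammaN (sm RM : ℝ) (N : ℕ) (θ : Param) : ℝ :=
  θ.2.2 * (1 - Real.log (θ.2.1 / sm) / (2 * ((N : ℝ) - 1) * RM))

/-- The accumulated empirical competition
`Ĉ_N(t,s_1,θ_1) = γ_N(θ_1) ∫_0^t (1 − (N/(N−1)) ∫ C(ŝ_N(τ,s_1,θ_1), s', |x_1−x'|) dμ̂_N^{s,x}(τ))
e^{γ_N(θ_1)(τ−t)} dτ`. -/
noncomputable def accCompN (sm RM σx σr : ℝ) (N : ℕ) (μhat : ℝ → Measure Zst)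
    (shat : ℝ → ℝ → Param → ℝ) (t s1 : ℝ) (θ1 : Param) : ℝ :=
  gammaN sm RM N θ1 * ∫ τ in (0:ℝ)..t,
    (1 - ((N : ℝ) / ((N : ℝ) - 1)) *
        ∫ z, pot sm RM σx σr (shat τ s1 θ1) z.1 (dist θ1.1 z.2.1) ∂(μhat τ)) *
      Real.exp (gammaN sm RM N θ1 * (τ - t))

/-- The accumulated mean-field competition
`C_∞(t,s_2,θ_2) = γ_2 ∫_0^t (1 − ∫ C(s_∞(τ,s_2,θ_2), s', |x_2−x'|) dμ_∞^{s,x}(τ))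
e^{γ_2(τ−t)} dτ`. -/
noncomputable def accCompInf (sm RM σx σr : ℝ) (μInf : ℝ → Measure Zst)
    (sflow : ℝ → ℝ → Param → ℝ) (t s2 : ℝ) (θ2 : Param) : ℝ :=
  θ2.2.2 * ∫ τ in (0:ℝ)..t,
    (1 - ∫ z, pot sm RM σx σr (sflow τ s2 θ2) z.1 (dist θ2.1 z.2.1) ∂(μInf τ)) *
      Real.exp (θ2.2.2 * (τ - t))


namespace S18
open intervalIntegral


lemma integrable_dirac {α : Type*} [MeasurableSpace α] {g : α → ℝ} (hg : Measurable g)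
    (a : α) : Integrable g (Measure.dirac a) := by
  constructor
  · exact hg.aestronglyMeasurable
  · show HasFiniteIntegral g (Measure.dirac a)
    rw [HasFiniteIntegral, lintegral_dirac' a hg.enorm]
    exact enorm_lt_top

lemma cont_tanh : Continuous Real.tanh := by
  have h : Real.tanh = fun x => Real.sinh x / Real.cosh x :=
    funext Real.tanh_eq_sinh_div_cosh
  rw [h]
  exact Real.continuous_sinh.div Real.continuous_cosh (fun x => (Real.cosh_pos x).ne')

lemma pot_meas_z (sm RM σx σr a : ℝ) (x : EuclideanSpace ℝ (Fin 2)) :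
    Measurable (fun z : Zst => pot sm RM σx σr a z.1 (dist x z.2.1)) := by
  apply Measurable.mul
  · apply Measurable.div
    · exact Real.measurable_log.comp (measurable_fst.div_const sm)
    · apply Measurable.const_mul
      apply Measurable.add measurable_const
      apply Measurable.div_const
      apply Measurable.pow_const
      exact (continuous_const.dist (continuous_fst.comp continuous_snd)).measurable
  · apply Measurable.add measurable_const
    exact cont_tanh.measurable.comp
      ((Real.measurable_log.comp (measurable_fst.div_const a)).div_const σr)

lemma emp_integral {N : ℕ} (hN : 0 < N) (cfg : Fin N → Zst) (s : Fin N → ℝ → ℝ) (τ : ℝ)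
    (g : Zst → ℝ) (hg : Measurable g) :
    ∫ z, g z ∂(empCfg cfg s τ) = ((N:ℝ))⁻¹ * ∑ j, g (s j τ, (cfg j).2) := by
  rw [empCfg, MeasureTheory.integral_smul_measure, MeasureTheory.integral_finset_sum_measure
    (fun j _ => integrable_dirac hg _)]
  congr 1
  · rw [ENNReal.toReal_inv]
    simp
  · exact Finset.sum_congr rfl (fun j _ => integral_dirac g _)



lemma one_add_tanh_eq (y : ℝ) : 1 + Real.tanh y = Real.exp y / Real.cosh y := by
  have hc := (Real.cosh_pos y).ne'
  have h : Real.cosh y + Real.sinh y = Real.exp y := by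
    rw [Real.cosh_eq, Real.sinh_eq]; ring
  rw [Real.tanh_eq_sinh_div_cosh, ← h]
  field_simp

lemma one_add_tanh_nonneg (y : ℝ) : 0 ≤ 1 + Real.tanh y := by
  rw [one_add_tanh_eq]; positivity

lemma one_add_tanh_le_two (y : ℝ) : 1 + Real.tanh y ≤ 2 := by
  rw [one_add_tanh_eq, Real.cosh_eq, div_le_iff₀ (by positivity)]
  nlinarith [Real.exp_pos y, Real.exp_pos (-y)]

lemma one_add_tanh_le_exp (y : ℝ) : 1 + Real.tanh y ≤ 2 * Real.exp (2*y) := by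
  rw [one_add_tanh_eq, Real.cosh_eq, div_le_iff₀ (by positivity)]
  have h1 : Real.exp (2*y) = Real.exp y * Real.exp y := by
    rw [← Real.exp_add]; ring_nf
  have h2 : Real.exp y * Real.exp (-y) = 1 := by
    rw [← Real.exp_add]; simp
  nlinarith [Real.exp_pos y, Real.exp_pos (-y)]

lemma key_exp (a x : ℝ) (ha : 0 < a) (hx : x ≤ 0) :
    -(1/(a * Real.exp 1)) ≤ x * Real.exp (a*x) := by
  have hr : 0 ≤ -(a*x) := by nlinarith
  set r := -(a*x) with hrdef
  have h1 : r ≤ Real.exp (r - 1) := by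
    have := Real.add_one_le_exp (r - 1); linarith
  have h2 : r * Real.exp (-r) ≤ Real.exp (-(1:ℝ)) := by
    have := mul_le_mul_of_nonneg_right h1 (Real.exp_nonneg (-r))
    calc r * Real.exp (-r) ≤ Real.exp (r-1) * Real.exp (-r) := this
      _ = Real.exp (-(1:ℝ)) := by rw [← Real.exp_add]; ring_nf
  have hx' : x * Real.exp (a*x) = -(r * Real.exp (-r) / a) := by
    rw [hrdef]; field_simp
  have h4 : r * Real.exp (-r) * Real.exp 1 ≤ 1 := by
    have hinv : Real.exp (-(1:ℝ)) * Real.exp 1 = 1 := by rw [← Real.exp_add]; simp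
    nlinarith [Real.exp_pos 1]
  rw [hx', neg_le_neg_iff, div_le_div_iff₀ ha (by positivity)]
  nlinarith [ha.le]

variable {sm RM σx σr : ℝ}

lemma denom_ge (hRM : 0 < RM) (hσx : 0 < σx) (d : ℝ) :
    2 * RM ≤ 2 * RM * (1 + d ^ 2 / σx ^ 2) := by
  nlinarith [div_nonneg (sq_nonneg d) (sq_nonneg σx)]

lemma denom_pos (hRM : 0 < RM) (hσx : 0 < σx) (d : ℝ) :
    0 < 2 * RM * (1 + d ^ 2 / σx ^ 2) := lt_of_lt_of_le (by linarith) (denom_ge hRM hσx d)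

lemma pot_nonneg (hsm : 0 < sm) (hRM : 0 < RM) (hσx : 0 < σx) {s s' d : ℝ}
    (h : sm ≤ s') : 0 ≤ pot sm RM σx σr s s' d := by
  apply mul_nonneg _ (one_add_tanh_nonneg _)
  apply div_nonneg _ (denom_pos hRM hσx d).le
  apply Real.log_nonneg
  rw [le_div_iff₀ hsm]; linarith

lemma pot_le_one (hsm : 0 < sm) (hRM : 0 < RM) (hσx : 0 < σx) {s s' d : ℝ}
    (h : sm ≤ s') (h2 : s' ≤ sm * Real.exp RM) : pot sm RM σx σr s s' d ≤ 1 := by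
  have hx0 : 0 ≤ Real.log (s'/sm) := by
    apply Real.log_nonneg; rw [le_div_iff₀ hsm]; linarith
  have hxRM : Real.log (s'/sm) ≤ RM := by
    have h3 : s'/sm ≤ Real.exp RM := by rw [div_le_iff₀ hsm]; linarith [h2]
    have := Real.log_le_log (div_pos (by linarith) hsm) h3
    rwa [Real.log_exp] at this
  have e1 : pot sm RM σx σr s s' d ≤ Real.log (s'/sm) / (2*RM) * 2 := by
    apply mul_le_mul _ (one_add_tanh_le_two _) (one_add_tanh_nonneg _)
      (div_nonneg hx0 (by linarith))
    exact div_le_div_of_nonneg_left hx0 (by linarith) (denom_ge hRM hσx d)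
  have e2 : Real.log (s'/sm) / (2*RM) * 2 = Real.log (s'/sm) / RM := by
    field_simp
  have e3 : Real.log (s'/sm) / RM ≤ 1 := by
    rw [div_le_one hRM]; exact hxRM
  linarith

lemma pot_abs_le (hsm : 0 < sm) (hRM : 0 < RM) (hσx : 0 < σx) (s s' d : ℝ) :
    |pot sm RM σx σr s s' d| ≤ |Real.log (s'/sm)| / RM := by
  have hD := denom_pos hRM hσx d
  have hF0 := one_add_tanh_nonneg (Real.log (s' / s) / σr)
  have hF2 := one_add_tanh_le_two (Real.log (s' / s) / σr)
  rw [pot, abs_mul, abs_div, abs_of_pos hD, abs_of_nonneg hF0]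
  have e1 : |Real.log (s'/sm)| / (2*RM*(1+d^2/σx^2)) * (1 + Real.tanh (Real.log (s'/s)/σr))
      ≤ |Real.log (s'/sm)| / (2*RM) * 2 := by
    apply mul_le_mul _ hF2 hF0 (div_nonneg (abs_nonneg _) (by linarith))
    exact div_le_div_of_nonneg_left (abs_nonneg _) (by linarith) (denom_ge hRM hσx d)
  have e2 : |Real.log (s'/sm)| / (2*RM) * 2 = |Real.log (s'/sm)| / RM := by
    field_simp
  linarith

lemma pot_upper (hsm : 0 < sm) (hRM : 0 < RM) (hσx : 0 < σx) (s s' d : ℝ) :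
    pot sm RM σx σr s s' d ≤ max (Real.log (s'/sm)) 0 / RM := by
  have hD := denom_pos hRM hσx d
  have hF0 := one_add_tanh_nonneg (Real.log (s' / s) / σr)
  have hF2 := one_add_tanh_le_two (Real.log (s' / s) / σr)
  rcases le_or_gt 0 (Real.log (s'/sm)) with hx | hx
  · have e1 : pot sm RM σx σr s s' d ≤ Real.log (s'/sm) / (2*RM) * 2 := by
      apply mul_le_mul _ hF2 hF0 (div_nonneg hx (by linarith))
      exact div_le_div_of_nonneg_left hx (by linarith) (denom_ge hRM hσx d)
    have e2 : Real.log (s'/sm) / (2*RM) * 2 = Real.log (s'/sm) / RM := by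
      field_simp
    have e3 : Real.log (s'/sm) / RM ≤ max (Real.log (s'/sm)) 0 / RM :=
      div_le_div_of_nonneg_right (le_max_left _ _) hRM.le
    linarith
  · have e1 : pot sm RM σx σr s s' d ≤ 0 := by
      apply mul_nonpos_of_nonpos_of_nonneg _ hF0
      exact div_nonpos_of_nonpos_of_nonneg hx.le hD.le
    have e2 : (0:ℝ) ≤ max (Real.log (s'/sm)) 0 / RM := by positivity
    linarith

lemma pot_lower (hsm : 0 < sm) (hRM : 0 < RM) (hσx : 0 < σx) (hσr : 0 < σr)
    {s s' d : ℝ} (hs : sm ≤ s) (hs' : 0 < s') :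
    -(σr / (2 * Real.exp 1 * RM)) ≤ pot sm RM σx σr s s' d := by
  have hcpos : (0:ℝ) < σr / (2 * Real.exp 1 * RM) := by
    have := Real.exp_pos 1; positivity
  rcases le_or_gt sm s' with h | h
  · have := pot_nonneg (σr := σr) hsm hRM hσx (s := s) (d := d) h
    linarith
  · set x := Real.log (s'/sm) with hxdef
    have hx : x < 0 := by
      apply Real.log_neg (by positivity); rw [div_lt_iff₀ hsm]; linarith
    have hspos : 0 < s := lt_of_lt_of_le hsm hs
    have hy : Real.log (s'/s) ≤ x := by
      apply Real.log_le_log (by positivity)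
      exact div_le_div_of_nonneg_left hs'.le hsm hs
    have hD := denom_pos hRM hσx d
    have hF0 := one_add_tanh_nonneg (Real.log (s' / s) / σr)
    have hFe : 1 + Real.tanh (Real.log (s'/s)/σr) ≤ 2 * Real.exp (2*(x/σr)) := by
      have t1 := one_add_tanh_le_exp (Real.log (s'/s)/σr)
      have t2 : Real.exp (2*(Real.log (s'/s)/σr)) ≤ Real.exp (2*(x/σr)) := by
        apply Real.exp_le_exp.mpr
        apply mul_le_mul_of_nonneg_left _ (by norm_num)
        exact div_le_div_of_nonneg_right hy hσr.le
      linarith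
    have step1 : x / (2*RM) * (2 * Real.exp (2*(x/σr))) ≤ pot sm RM σx σr s s' d := by
      rw [pot, ← hxdef]
      have hxd : x / (2*RM) ≤ x / (2*RM*(1+d^2/σx^2)) := by
        rw [div_le_div_iff₀ (by linarith) hD]
        nlinarith [denom_ge hRM hσx d]
      have h1 : x / (2*RM) * (1 + Real.tanh (Real.log (s'/s)/σr))
          ≤ x / (2*RM*(1+d^2/σx^2)) * (1 + Real.tanh (Real.log (s'/s)/σr)) :=
        mul_le_mul_of_nonneg_right hxd hF0
      have h2 : x / (2*RM) * (2 * Real.exp (2*(x/σr)))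
          ≤ x / (2*RM) * (1 + Real.tanh (Real.log (s'/s)/σr)) :=
        mul_le_mul_of_nonpos_left hFe
          (div_nonpos_of_nonpos_of_nonneg hx.le (by linarith))
      linarith
    have step2 : -(σr / (2 * Real.exp 1 * RM)) ≤ x / (2*RM) * (2 * Real.exp (2*(x/σr))) := by
      have hkey := key_exp (2/σr) x (by positivity) hx.le
      have hrw : x / (2*RM) * (2 * Real.exp (2*(x/σr))) = x * Real.exp ((2/σr)*x) / RM := by
        rw [show (2:ℝ)*(x/σr) = (2/σr)*x by ring]
        field_simp
      rw [hrw, neg_le, ← neg_div, div_le_iff₀ hRM]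
      have he := Real.exp_pos 1
      have e1 : σr / (2*Real.exp 1*RM) * RM = σr/(2*Real.exp 1) := by field_simp
      have e2 : 1/((2/σr)*Real.exp 1) = σr/(2*Real.exp 1) := by
        rw [div_mul_eq_mul_div, one_div_div]
      rw [e1]
      rw [e2] at hkey
      linarith
    linarith



lemma abs_one_add_mul_exp {v : ℝ} (hv : v ≤ 0) : |(1+v) * Real.exp v| ≤ 1 := by
  have h1 : Real.exp v * Real.exp (-v) = 1 := by rw [← Real.exp_add]; simp
  have h2 := Real.add_one_le_exp (-v)
  have h3 := Real.exp_pos v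
  have h4 := Real.exp_pos (-v)
  rw [abs_le]
  constructor <;> nlinarith

lemma abs_gexp_le {u a b : ℝ} (hu : u ≤ 0) (ha : 0 ≤ a) (hb : 0 ≤ b) :
    |a * Real.exp (a*u) - b * Real.exp (b*u)| ≤ |a - b| := by
  set s : Set ℝ := Icc (min a b) (max a b) with hs
  have hder : ∀ x ∈ s, HasDerivWithinAt (fun x => x * Real.exp (x*u))
      ((1 + x*u) * Real.exp (x*u)) s x := by
    intro x hx
    have h1 : HasDerivAt (fun x : ℝ => x*u) u x := hasDerivAt_mul_const u
    have h2 : HasDerivAt (fun x : ℝ => Real.exp (x*u)) (Real.exp (x*u) * u) x := h1.exp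
    have h3 := (hasDerivAt_id x).mul h2
    simp only [one_mul, id] at h3
    have : Real.exp (x*u) + x * (Real.exp (x*u) * u) = (1 + x*u) * Real.exp (x*u) := by ring
    rw [this] at h3
    exact h3.hasDerivWithinAt
  have hbound : ∀ x ∈ s, ‖(1 + x*u) * Real.exp (x*u)‖ ≤ 1 := by
    intro x hx
    have hx0 : 0 ≤ x := le_trans (le_min ha hb) hx.1
    exact abs_one_add_mul_exp (mul_nonpos_of_nonneg_of_nonpos hx0 hu)
  have ha' : a ∈ s := ⟨min_le_left _ _, le_max_left _ _⟩
  have hb' : b ∈ s := ⟨min_le_right _ _, le_max_right _ _⟩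
  have := Convex.norm_image_sub_le_of_norm_hasDerivWithin_le hder hbound (convex_Icc _ _) hb' ha'
  rw [one_mul] at this
  simpa [Real.norm_eq_abs] using this

lemma threshold_upper {f φ : ℝ → ℝ} {Bd : ℝ}
    (hder : ∀ t, 0 ≤ t → HasDerivWithinAt f (φ t) (Ici 0) t)
    (hphi : ∀ t, 0 ≤ t → Bd ≤ f t → φ t ≤ 0) :
    ∀ t, 0 ≤ t → f t ≤ max (f 0) Bd := by
  intro t ht
  by_contra hgt
  push_neg at hgt
  have hcont : ContinuousOn f (Ici 0) := fun x hx => (hder x hx).continuousWithinAt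
  have htpos : 0 < t := by
    rcases eq_or_lt_of_le ht with h | h
    · exact absurd (le_max_left (f 0) Bd) (not_le.mpr (h ▸ hgt))
    · exact h
  set M := max (f 0) Bd with hM
  set SS := {τ : ℝ | τ ∈ Icc 0 t ∧ f τ ≤ M} with hSS
  have hne : SS.Nonempty := ⟨0, ⟨le_refl 0, htpos.le⟩, le_max_left _ _⟩
  have hclosed : IsClosed SS := by
    have h := (hcont.mono (Icc_subset_Ici_self : Icc (0:ℝ) t ⊆ Ici 0)).preimage_isClosed_of_isClosed
      isClosed_Icc (isClosed_Iic (a := M))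
    exact h
  have hbdd : BddAbove SS := ⟨t, fun τ hτ => hτ.1.2⟩
  have hTmem : sSup SS ∈ SS := hclosed.csSup_mem hne hbdd
  obtain ⟨T, hTdef⟩ : ∃ T : ℝ, sSup SS = T := ⟨sSup SS, rfl⟩
  rw [hTdef] at hTmem
  have hT0 : 0 ≤ T := hTmem.1.1
  have hTt : T ≤ t := hTmem.1.2
  have hTlt : T < t := lt_of_le_of_ne hTt (by rintro rfl; exact absurd hTmem.2 (not_le.mpr hgt))
  have hout : ∀ x, T < x → x ≤ t → M < f x := by
    intro x hx1 hx2
    by_contra hle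
    push_neg at hle
    exact absurd (hTdef ▸ le_csSup hbdd ⟨⟨le_trans hT0 hx1.le, hx2⟩, hle⟩) (not_le.mpr hx1)
  have hanti : AntitoneOn f (Icc T t) := by
    apply antitoneOn_of_deriv_nonpos (convex_Icc T t)
      (hcont.mono (Icc_subset_Ici_self.trans (Ici_subset_Ici.mpr hT0)))
    · intro x hx
      rw [interior_Icc] at hx
      have hx0 : 0 < x := lt_of_le_of_lt hT0 hx.1
      exact ((hder x hx0.le).hasDerivAt (Ici_mem_nhds hx0)).differentiableAt.differentiableWithinAt
    · intro x hx
      rw [interior_Icc] at hx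
      have hx0 : 0 < x := lt_of_le_of_lt hT0 hx.1
      have hda := (hder x hx0.le).hasDerivAt (Ici_mem_nhds hx0)
      rw [hda.deriv]
      apply hphi x hx0.le
      have := hout x hx.1 hx.2.le
      calc Bd ≤ M := le_max_right _ _
        _ ≤ f x := this.le
  have := hanti ⟨le_refl T, hTt⟩ ⟨hTt, le_refl t⟩ hTt
  exact absurd (le_trans this hTmem.2) (not_le.mpr hgt)

lemma threshold_lower {f φ : ℝ → ℝ} {Bd : ℝ}
    (hder : ∀ t, 0 ≤ t → HasDerivWithinAt f (φ t) (Ici 0) t)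
    (hphi : ∀ t, 0 ≤ t → f t ≤ Bd → 0 ≤ φ t) :
    ∀ t, 0 ≤ t → min (f 0) Bd ≤ f t := by
  intro t ht
  have hneg := threshold_upper (f := fun τ => -f τ) (φ := fun τ => -φ τ) (Bd := -Bd)
    (fun τ hτ => (hder τ hτ).neg)
    (fun τ hτ h => by
      have h' : -Bd ≤ -f τ := h
      have h'' : f τ ≤ Bd := by linarith
      have := hphi τ hτ h''
      show -φ τ ≤ 0
      linarith) t ht
  have h1 : -f t ≤ max (-f 0) (-Bd) := hneg
  rcases le_total (f 0) Bd with h | h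
  · rw [min_eq_left h] at *
    have : max (-f 0) (-Bd) = -f 0 := max_eq_left (by linarith)
    rw [this] at h1; linarith
  · rw [min_eq_right h] at *
    have : max (-f 0) (-Bd) = -Bd := max_eq_right (by linarith)
    rw [this] at h1; linarith

lemma integral_ge_const {α : Type*} [MeasurableSpace α] (μ : Measure α) [IsProbabilityMeasure μ]
    {g : α → ℝ} {c : ℝ} (hc : c ≤ 0) (h : ∀ᵐ z ∂μ, c ≤ g z) : c ≤ ∫ z, g z ∂μ := by
  by_cases hint : Integrable g μ
  · have := integral_mono_ae (integrable_const c) hint h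
    simpa using this
  · rw [integral_undef hint]; exact hc

lemma integral_le_const {α : Type*} [MeasurableSpace α] (μ : Measure α) [IsProbabilityMeasure μ]
    {g : α → ℝ} {c : ℝ} (hc : 0 ≤ c) (h : ∀ᵐ z ∂μ, g z ≤ c) : ∫ z, g z ∂μ ≤ c := by
  by_cases hint : Integrable g μ
  · have := integral_mono_ae hint (integrable_const c) h
    simpa using this
  · rw [integral_undef hint]; exact hc



lemma cIdx_mem {sm RM σx σr : ℝ} (hsm : 0 < sm) (hRM : 0 < RM) (hσx : 0 < σx)
    {N : ℕ} (hN : 1 < N) (cfg : Fin N → Zst) (s : Fin N → ℝ → ℝ) (i : Fin N) (τ : ℝ)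
    (hbox : ∀ j, sm ≤ s j τ ∧ s j τ ≤ sm * Real.exp RM) :
    0 ≤ cIdx sm RM σx σr cfg s i τ ∧ cIdx sm RM σx σr cfg s i τ ≤ 1 := by
  have hN1 : (0:ℝ) < (N:ℝ) - 1 := by
    have : (1:ℝ) < (N:ℝ) := by exact_mod_cast hN
    linarith
  have hcard : (Finset.univ.erase i).card = N - 1 := by
    rw [Finset.card_erase_of_mem (Finset.mem_univ i), Finset.card_univ, Fintype.card_fin]
  constructor
  · apply mul_nonneg (by positivity)
    apply Finset.sum_nonneg
    intro j _
    exact pot_nonneg hsm hRM hσx (hbox j).1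
  · rw [cIdx]
    have hsum : ∑ j ∈ Finset.univ.erase i,
        pot sm RM σx σr (s i τ) (s j τ) (dist (cfg i).2.1 (cfg j).2.1) ≤ (N:ℝ) - 1 := by
      calc ∑ j ∈ Finset.univ.erase i,
          pot sm RM σx σr (s i τ) (s j τ) (dist (cfg i).2.1 (cfg j).2.1)
          ≤ ∑ _j ∈ Finset.univ.erase i, (1:ℝ) := by
            apply Finset.sum_le_sum
            intro j _
            exact pot_le_one hsm hRM hσx (hbox j).1 (hbox j).2
        _ = ((N:ℝ) - 1) := by
            rw [Finset.sum_const, hcard, nsmul_eq_mul]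
            have : (1:ℝ) ≤ (N:ℝ) := by exact_mod_cast hN.le
            push_cast [Nat.cast_sub (by omega : 1 ≤ N)]
            ring
    calc 1 / ((N:ℝ)-1) * ∑ j ∈ Finset.univ.erase i,
        pot sm RM σx σr (s i τ) (s j τ) (dist (cfg i).2.1 (cfg j).2.1)
        ≤ 1 / ((N:ℝ)-1) * ((N:ℝ)-1) := by
          apply mul_le_mul_of_nonneg_left hsum (by positivity)
      _ = 1 := by field_simp

set_option maxHeartbeats 2000000 in
lemma particle_invariance
    (sm RM σx σr γM s0min s0max SM : ℝ)
    (hsm : 0 < sm) (hRM : 0 < RM) (hσx : 0 < σx) (hσr : 0 < σr)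
    (h1 : sm < s0min) (h2 : s0min < s0max) (h3 : s0max < SM) (h4 : SM < sm * Real.exp RM)
    {N : ℕ} (hN : 1 < N) (cfg : Fin N → Zst)
    (hcfg : AdmissibleCfg sm RM γM s0min s0max SM cfg)
    (s : Fin N → ℝ → ℝ) (hsol : IsCompetitionSol sm RM σx σr cfg s) :
    ∀ t, 0 ≤ t → ∀ j, sm < s j t ∧ s j t < sm * Real.exp RM := by
  have hcont : ∀ j, ContinuousOn (s j) (Ici 0) :=
    fun j x hx => (((hsol j).2) x hx).continuousWithinAt
  have hinit : ∀ j, s0min < s j 0 ∧ s j 0 < s0max := by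
    intro j; rw [(hsol j).1]; exact ⟨(hcfg j).1, (hcfg j).2.1⟩
  by_contra hbad
  push_neg at hbad
  obtain ⟨t₁, ht₁, j₁, hj₁⟩ := hbad
  set W : Set ℝ := ⋃ j, ((Ici 0 ∩ s j ⁻¹' Iic sm) ∪ (Ici 0 ∩ s j ⁻¹' Ici (sm * Real.exp RM)))
    with hW
  have hWsub : W ⊆ Ici 0 := by
    intro τ hτ
    simp only [hW, mem_iUnion, mem_union, mem_inter_iff] at hτ
    obtain ⟨j, hj | hj⟩ := hτ <;> exact hj.1
  have hWmem : ∀ τ, τ ∈ W ↔ 0 ≤ τ ∧ ∃ j, s j τ ≤ sm ∨ sm * Real.exp RM ≤ s j τ := by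
    intro τ
    simp only [hW, mem_iUnion, mem_union, mem_inter_iff, mem_preimage, mem_Iic, mem_Ici]
    constructor
    · rintro ⟨j, hj | hj⟩
      · exact ⟨hj.1, j, Or.inl hj.2⟩
      · exact ⟨hj.1, j, Or.inr hj.2⟩
    · rintro ⟨hτ, j, hj | hj⟩
      · exact ⟨j, Or.inl ⟨hτ, hj⟩⟩
      · exact ⟨j, Or.inr ⟨hτ, hj⟩⟩
  have hWne : W.Nonempty := by
    refine ⟨t₁, (hWmem t₁).mpr ⟨ht₁, j₁, ?_⟩⟩
    by_cases hc : sm < s j₁ t₁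
    · exact Or.inr (hj₁ hc)
    · exact Or.inl (not_lt.mp hc)
  have hWclosed : IsClosed W := by
    apply isClosed_iUnion_of_finite
    intro j
    apply IsClosed.union
    · exact (hcont j).preimage_isClosed_of_isClosed isClosed_Ici isClosed_Iic
    · exact (hcont j).preimage_isClosed_of_isClosed isClosed_Ici isClosed_Ici
  have hWbdd : BddBelow W := ⟨0, fun τ hτ => hWsub hτ⟩
  have hTmem0 : sInf W ∈ W := hWclosed.csInf_mem hWne hWbdd
  obtain ⟨T, hTdef⟩ : ∃ T : ℝ, sInf W = T := ⟨_, rfl⟩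
  rw [hTdef] at hTmem0
  have hT0 : 0 ≤ T := hWsub hTmem0
  have hTpos : 0 < T := by
    rcases eq_or_lt_of_le hT0 with h | h
    · exfalso
      obtain ⟨-, j, hj | hj⟩ := (hWmem T).mp hTmem0
      · rw [← h] at hj; linarith [(hinit j).1]
      · rw [← h] at hj; linarith [(hinit j).2]
    · exact h
  have hInside : ∀ τ, 0 ≤ τ → τ < T → ∀ j, sm < s j τ ∧ s j τ < sm * Real.exp RM := by
    intro τ hτ0 hτT j
    have hτW : τ ∉ W := fun hc => absurd (hTdef ▸ csInf_le hWbdd hc) (not_le.mpr hτT)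
    rw [hWmem] at hτW
    push_neg at hτW
    exact hτW hτ0 j
  have hClosedIn : ∀ j, sm ≤ s j T ∧ s j T ≤ sm * Real.exp RM := by
    intro j
    have hcw : ContinuousWithinAt (s j) (Ico 0 T) T :=
      ((hcont j) T hT0).mono (fun x hx => hx.1)
    have hnb : (nhdsWithin T (Ico 0 T)).NeBot := by
      apply mem_closure_iff_nhdsWithin_neBot.mp
      rw [closure_Ico (ne_of_lt hTpos)]
      exact ⟨hT0, le_refl T⟩
    constructor
    · apply ge_of_tendsto hcw
      filter_upwards [self_mem_nhdsWithin] with x hx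
      exact (hInside x hx.1 hx.2 j).1.le
    · apply le_of_tendsto hcw
      filter_upwards [self_mem_nhdsWithin] with x hx
      exact (hInside x hx.1 hx.2 j).2.le
  have hbox : ∀ τ ∈ Icc 0 T, ∀ j, sm ≤ s j τ ∧ s j τ ≤ sm * Real.exp RM := by
    intro τ hτ j
    rcases eq_or_lt_of_le hτ.2 with h | h
    · rw [h]; exact hClosedIn j
    · exact ⟨(hInside τ hτ.1 h j).1.le, (hInside τ hτ.1 h j).2.le⟩
  have hstrict : ∀ j, sm < s j T ∧ s j T < sm * Real.exp RM := by
    intro j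
    set γ := (cfg j).2.2.2 with hγ
    set Sc := (cfg j).2.2.1 with hSc
    have hγ0 : 0 ≤ γ := (hcfg j).2.2.2.2.1
    have hL0 : 0 ≤ Real.log (Sc / sm) := by
      apply Real.log_nonneg
      rw [le_div_iff₀ hsm]
      have := (hcfg j).2.2.1; nlinarith [h1, h2, h3]
    have hLRM : Real.log (Sc / sm) ≤ RM := by
      have hup : Sc / sm ≤ Real.exp RM := by
        rw [div_le_iff₀ hsm]
        have := (hcfg j).2.2.2.1; linarith
      have hl := Real.log_le_log (by
        have := (hcfg j).2.2.1
        have hSc0 : 0 < Sc := by nlinarith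
        positivity) hup
      rwa [Real.log_exp] at hl
    have hspos : ∀ τ ∈ Icc 0 T, 0 < s j τ := fun τ hτ => lt_of_lt_of_le hsm (hbox τ hτ j).1
    have hDA : ∀ x ∈ Ioo 0 T, HasDerivAt (s j)
        (γ * s j x * (Real.log (Sc / sm) * (1 - cIdx sm RM σx σr cfg s j x)
          - Real.log (s j x / sm))) x := by
      intro x hx
      exact ((hsol j).2 x hx.1.le).hasDerivAt (Ici_mem_nhds hx.1)
    set u : ℝ → ℝ := fun τ => Real.log (s j τ) - Real.log sm with hu
    have hucont : ContinuousOn u (Icc 0 T) := by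
      apply ContinuousOn.sub _ continuousOn_const
      apply ContinuousOn.log ((hcont j).mono (fun x hx => hx.1))
      intro x hx
      exact (hspos x hx).ne'
    have huDA : ∀ x ∈ Ioo 0 T, HasDerivAt u
        (γ * (Real.log (Sc/sm) * (1 - cIdx sm RM σx σr cfg s j x) - u x)) x := by
      intro x hx
      have hsx := hspos x ⟨hx.1.le, hx.2.le⟩
      have hlog := ((hDA x hx).log hsx.ne').sub_const (Real.log sm)
      have heq : γ * s j x * (Real.log (Sc / sm) * (1 - cIdx sm RM σx σr cfg s j x)
          - Real.log (s j x / sm)) / s j x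
          = γ * (Real.log (Sc/sm) * (1 - cIdx sm RM σx σr cfg s j x) - u x) := by
        rw [Real.log_div hsx.ne' hsm.ne']
        field_simp
        ring
      rw [heq] at hlog
      exact hlog
    have hexpc : Continuous (fun τ : ℝ => Real.exp (γ * τ)) := by continuity
    have hexpDA : ∀ x : ℝ, HasDerivAt (fun y : ℝ => Real.exp (γ * y))
        (Real.exp (γ * x) * γ) x := by
      intro x
      have h0 : HasDerivAt (fun y : ℝ => γ * y) γ x := by
        simpa using (hasDerivAt_id x).const_mul γ
      exact h0.exp
    have hC01 : ∀ x ∈ Ioo 0 T, 0 ≤ cIdx sm RM σx σr cfg s j x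
        ∧ cIdx sm RM σx σr cfg s j x ≤ 1 := by
      intro x hx
      exact cIdx_mem hsm hRM hσx hN cfg s j x (hbox x ⟨hx.1.le, hx.2.le⟩)
    have hmono1 : MonotoneOn (fun τ => u τ * Real.exp (γ * τ)) (Icc 0 T) := by
      apply monotoneOn_of_deriv_nonneg (convex_Icc 0 T) (hucont.mul hexpc.continuousOn)
      · intro x hx
        rw [interior_Icc] at hx
        exact ((huDA x hx).mul (hexpDA x)).differentiableAt.differentiableWithinAt
      · intro x hx
        rw [interior_Icc] at hx
        have hd := (huDA x hx).mul (hexpDA x)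
        rw [hd.deriv]
        have hC := hC01 x hx
        have h1C : 0 ≤ 1 - cIdx sm RM σx σr cfg s j x := by linarith [hC.2]
        have hval : γ * (Real.log (Sc/sm) * (1 - cIdx sm RM σx σr cfg s j x) - u x)
              * Real.exp (γ*x) + u x * (Real.exp (γ*x) * γ)
            = Real.exp (γ*x) * (γ * (Real.log (Sc/sm)
              * (1 - cIdx sm RM σx σr cfg s j x))) := by ring
        rw [hval]
        have hep := Real.exp_pos (γ*x)
        exact mul_nonneg hep.le (mul_nonneg hγ0 (mul_nonneg hL0 h1C))
    have hmono2 : MonotoneOn (fun τ => (RM - u τ) * Real.exp (γ * τ)) (Icc 0 T) := by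
      apply monotoneOn_of_deriv_nonneg (convex_Icc 0 T)
        ((continuousOn_const.sub hucont).mul hexpc.continuousOn)
      · intro x hx
        rw [interior_Icc] at hx
        exact (((hasDerivAt_const x RM).sub (huDA x hx)).mul
          (hexpDA x)).differentiableAt.differentiableWithinAt
      · intro x hx
        rw [interior_Icc] at hx
        have hd := ((hasDerivAt_const x RM).sub (huDA x hx)).mul (hexpDA x)
        rw [hd.deriv]
        have hC := hC01 x hx
        have h1C : 0 ≤ 1 - cIdx sm RM σx σr cfg s j x := by linarith [hC.2]
        have h1C' : 1 - cIdx sm RM σx σr cfg s j x ≤ 1 := by linarith [hC.1]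
        have hLC : Real.log (Sc/sm) * (1 - cIdx sm RM σx σr cfg s j x) ≤ RM := by
          have e1 : Real.log (Sc/sm) * (1 - cIdx sm RM σx σr cfg s j x)
              ≤ Real.log (Sc/sm) * 1 := mul_le_mul_of_nonneg_left h1C' hL0
          linarith
        have hval : (0 - γ * (Real.log (Sc/sm) * (1 - cIdx sm RM σx σr cfg s j x) - u x))
              * Real.exp (γ*x) + (RM - u x) * (Real.exp (γ*x) * γ)
            = Real.exp (γ*x) * (γ * (RM - Real.log (Sc/sm)
              * (1 - cIdx sm RM σx σr cfg s j x))) := by ring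
        show 0 ≤ (0 - γ * (Real.log (Sc/sm) * (1 - cIdx sm RM σx σr cfg s j x) - u x))
              * Real.exp (γ*x) + (RM - u x) * (Real.exp (γ*x) * γ)
        rw [hval]
        have hep := Real.exp_pos (γ*x)
        exact mul_nonneg hep.le (mul_nonneg hγ0 (by linarith))
    have hu0pos : 0 < u 0 := by
      have hl : Real.log sm < Real.log (s j 0) :=
        Real.log_lt_log hsm (by linarith [(hinit j).1])
      simp only [hu]; linarith
    have hu0RM : u 0 < RM := by
      have hlt : s j 0 < sm * Real.exp RM := by
        have := (hinit j).2; nlinarith [h3, h4]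
      have hl : Real.log (s j 0) < Real.log (sm * Real.exp RM) :=
        Real.log_lt_log (by linarith [(hinit j).1]) hlt
      rw [Real.log_mul hsm.ne' (Real.exp_pos RM).ne', Real.log_exp] at hl
      simp only [hu]; linarith
    have hmem0 : (0:ℝ) ∈ Icc 0 T := ⟨le_refl 0, hT0⟩
    have hmemT : T ∈ Icc 0 T := ⟨hT0, le_refl T⟩
    have he1 := hmono1 hmem0 hmemT hT0
    have he2 := hmono2 hmem0 hmemT hT0
    simp only [mul_zero, Real.exp_zero, mul_one] at he1 he2
    have hexpT := Real.exp_pos (γ * T)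
    have huT : 0 < u T := by
      by_contra hcc
      push_neg at hcc
      have hn : u T * Real.exp (γ * T) ≤ 0 := mul_nonpos_of_nonpos_of_nonneg hcc hexpT.le
      linarith
    have huTRM : u T < RM := by
      by_contra hcc
      push_neg at hcc
      have hn : (RM - u T) * Real.exp (γ * T) ≤ 0 :=
        mul_nonpos_of_nonpos_of_nonneg (by linarith) hexpT.le
      linarith
    have hsT0 : 0 < s j T := hspos T hmemT
    constructor
    · by_contra hc
      push_neg at hc
      have hl : Real.log (s j T) ≤ Real.log sm := Real.log_le_log hsT0 hc
      simp only [hu] at huT; linarith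
    · by_contra hc
      push_neg at hc
      have h5 : Real.log (sm * Real.exp RM) ≤ Real.log (s j T) :=
        Real.log_le_log (by positivity) hc
      rw [Real.log_mul hsm.ne' (Real.exp_pos RM).ne', Real.log_exp] at h5
      simp only [hu] at huTRM; linarith
  obtain ⟨-, j, hj | hj⟩ := (hWmem T).mp hTmem0
  · linarith [(hstrict j).1]
  · linarith [(hstrict j).2]




lemma flow_log_deriv (sm RM σx σr γM : ℝ) (hsm : 0 < sm)
    (μ0 : Measure Zst) (sInf : ℝ → ℝ → Param → ℝ)
    (hflow : IsMeanFieldFlow sm RM σx σr γM μ0 (fun t s0 x S γ => sInf t s0 (x, S, γ)))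
    (s0 : ℝ) (x : EuclideanSpace ℝ (Fin 2)) (S γ : ℝ)
    (hc1 : 0 < s0) (hc2 : sm ≤ S) (hc3 : S ≤ sm * Real.exp RM) (hc4 : 0 ≤ γ) (hc5 : γ ≤ γM) :
    ∀ t, 0 ≤ t → HasDerivWithinAt (fun τ => Real.log (sInf τ s0 (x,S,γ)) - Real.log sm)
      (γ * (Real.log (S/sm) * (1 - ∫ z, pot sm RM σx σr (sInf t s0 (x,S,γ))
            (sInf t z.1 z.2) (dist x z.2.1) ∂μ0)
        - (Real.log (sInf t s0 (x,S,γ)) - Real.log sm))) (Ici 0) t := by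
  intro t ht
  obtain ⟨h0, hpos, hode⟩ := hflow s0 x S γ hc1 hc2 hc3 hc4 hc5
  have hft : 0 < sInf t s0 (x,S,γ) := hpos t ht
  have hlog := ((hode t ht).log hft.ne').sub_const (Real.log sm)
  have heq : γ * sInf t s0 (x,S,γ) * (Real.log (S / sm) *
        (1 - ∫ z, pot sm RM σx σr (sInf t s0 (x,S,γ)) (sInf t z.1 z.2) (dist x z.2.1) ∂μ0)
      - Real.log (sInf t s0 (x,S,γ) / sm)) / sInf t s0 (x,S,γ)
      = γ * (Real.log (S/sm) * (1 - ∫ z, pot sm RM σx σr (sInf t s0 (x,S,γ))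
            (sInf t z.1 z.2) (dist x z.2.1) ∂μ0)
        - (Real.log (sInf t s0 (x,S,γ)) - Real.log sm)) := by
    rw [Real.log_div hft.ne' hsm.ne']
    field_simp
  rw [heq] at hlog
  exact hlog

lemma mf_upper (sm RM σx σr γM s0min s0max SM : ℝ)
    (hsm : 0 < sm) (hRM : 0 < RM) (hσx : 0 < σx) (hσr : 0 < σr)
    (h1 : sm < s0min) (h2 : s0min < s0max) (h3 : s0max < SM) (h4 : SM < sm * Real.exp RM)
    (μ0 : Measure Zst) [IsProbabilityMeasure μ0]
    (hsupp : ∀ᵐ z ∂μ0, s0min < z.1 ∧ z.1 < s0max ∧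
      SM < z.2.2.1 ∧ z.2.2.1 < sm * Real.exp RM ∧ 0 ≤ z.2.2.2 ∧ z.2.2.2 ≤ γM)
    (sInf : ℝ → ℝ → Param → ℝ)
    (hflow : IsMeanFieldFlow sm RM σx σr γM μ0 (fun t s0 x S γ => sInf t s0 (x, S, γ)))
    (s0 : ℝ) (x : EuclideanSpace ℝ (Fin 2)) (S γ : ℝ)
    (hc1 : 0 < s0) (hc2 : sm ≤ S) (hc3 : S ≤ sm * Real.exp RM) (hc4 : 0 ≤ γ) (hc5 : γ ≤ γM) :
    ∀ t, 0 ≤ t → Real.log (sInf t s0 (x,S,γ)) - Real.log sm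
      ≤ max (Real.log s0 - Real.log sm) (RM * (1 + σr / (2 * Real.exp 1 * RM))) := by
  set c := σr / (2 * Real.exp 1 * RM) with hc
  have hcpos : 0 < c := by have := Real.exp_pos 1; positivity
  set B := RM * (1 + c) with hB
  have hBpos : 0 < B := by positivity
  obtain ⟨h0, hpos, -⟩ := hflow s0 x S γ hc1 hc2 hc3 hc4 hc5
  have h0' : sInf 0 s0 (x,S,γ) = s0 := h0
  have hL0 : 0 ≤ Real.log (S/sm) := by
    apply Real.log_nonneg; rw [le_div_iff₀ hsm]; linarith
  have hLRM : Real.log (S/sm) ≤ RM := by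
    have hup : S/sm ≤ Real.exp RM := by rw [div_le_iff₀ hsm]; linarith
    have hl := Real.log_le_log (div_pos (by linarith) hsm) hup
    rwa [Real.log_exp] at hl
  have hphi : ∀ t, 0 ≤ t → B ≤ Real.log (sInf t s0 (x,S,γ)) - Real.log sm →
      γ * (Real.log (S/sm) * (1 - ∫ z, pot sm RM σx σr (sInf t s0 (x,S,γ))
            (sInf t z.1 z.2) (dist x z.2.1) ∂μ0)
        - (Real.log (sInf t s0 (x,S,γ)) - Real.log sm)) ≤ 0 := by
    intro t ht hub
    have hft : 0 < sInf t s0 (x,S,γ) := hpos t ht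
    have hut : 0 ≤ Real.log (sInf t s0 (x,S,γ)) - Real.log sm := le_trans hBpos.le hub
    have hsmle : sm ≤ sInf t s0 (x,S,γ) := by
      by_contra hcon
      push_neg at hcon
      have := Real.log_le_log hft hcon.le
      linarith
    have hK : -c ≤ ∫ z, pot sm RM σx σr (sInf t s0 (x,S,γ)) (sInf t z.1 z.2)
        (dist x z.2.1) ∂μ0 := by
      apply integral_ge_const μ0 (by linarith)
      filter_upwards [hsupp] with z hz
      have hzpos : 0 < sInf t z.1 z.2 := by
        obtain ⟨-, hzpos', -⟩ := hflow z.1 z.2.1 z.2.2.1 z.2.2.2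
          (by linarith [hz.1]) (by linarith [hz.2.2.1]) (by linarith [hz.2.2.2.1])
          hz.2.2.2.2.1 hz.2.2.2.2.2
        exact hzpos' t ht
      exact pot_lower hsm hRM hσx hσr hsmle hzpos
    apply mul_nonpos_of_nonneg_of_nonpos hc4
    rcases le_or_gt (1 - ∫ z, pot sm RM σx σr (sInf t s0 (x,S,γ)) (sInf t z.1 z.2)
        (dist x z.2.1) ∂μ0) 0 with hs | hs
    · have hls : Real.log (S/sm) * (1 - ∫ z, pot sm RM σx σr (sInf t s0 (x,S,γ))
          (sInf t z.1 z.2) (dist x z.2.1) ∂μ0) ≤ 0 :=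
        mul_nonpos_of_nonneg_of_nonpos hL0 hs
      linarith
    · have hb1 : (1 - ∫ z, pot sm RM σx σr (sInf t s0 (x,S,γ)) (sInf t z.1 z.2)
          (dist x z.2.1) ∂μ0) ≤ 1 + c := by linarith
      have hls : Real.log (S/sm) * (1 - ∫ z, pot sm RM σx σr (sInf t s0 (x,S,γ))
          (sInf t z.1 z.2) (dist x z.2.1) ∂μ0) ≤ RM * (1 + c) :=
        mul_le_mul hLRM hb1 hs.le hRM.le
      linarith
  have key := threshold_upper
    (f := fun τ => Real.log (sInf τ s0 (x,S,γ)) - Real.log sm)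
    (φ := fun t => γ * (Real.log (S/sm) * (1 - ∫ z, pot sm RM σx σr (sInf t s0 (x,S,γ))
            (sInf t z.1 z.2) (dist x z.2.1) ∂μ0)
        - (Real.log (sInf t s0 (x,S,γ)) - Real.log sm))) (Bd := B)
    (flow_log_deriv sm RM σx σr γM hsm μ0 sInf hflow s0 x S γ hc1 hc2 hc3 hc4 hc5)
    hphi
  intro t ht
  have hk := key t ht
  simpa [h0'] using hk

lemma mf_lower (sm RM σx σr γM s0min s0max SM : ℝ)
    (hsm : 0 < sm) (hRM : 0 < RM) (hσx : 0 < σx) (hσr : 0 < σr)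
    (h1 : sm < s0min) (h2 : s0min < s0max) (h3 : s0max < SM) (h4 : SM < sm * Real.exp RM)
    (μ0 : Measure Zst) [IsProbabilityMeasure μ0]
    (hsupp : ∀ᵐ z ∂μ0, s0min < z.1 ∧ z.1 < s0max ∧
      SM < z.2.2.1 ∧ z.2.2.1 < sm * Real.exp RM ∧ 0 ≤ z.2.2.2 ∧ z.2.2.2 ≤ γM)
    (sInf : ℝ → ℝ → Param → ℝ)
    (hflow : IsMeanFieldFlow sm RM σx σr γM μ0 (fun t s0 x S γ => sInf t s0 (x, S, γ)))
    (s0 : ℝ) (x : EuclideanSpace ℝ (Fin 2)) (S γ : ℝ)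
    (hc1 : 0 < s0) (hc2 : sm ≤ S) (hc3 : S ≤ sm * Real.exp RM) (hc4 : 0 ≤ γ) (hc5 : γ ≤ γM) :
    ∀ t, 0 ≤ t →
      min (Real.log s0 - Real.log sm)
        (min 0 (RM * (1 - (max (Real.log (s0max/sm))
          (RM * (1 + σr / (2 * Real.exp 1 * RM)))) / RM)))
      ≤ Real.log (sInf t s0 (x,S,γ)) - Real.log sm := by
  set UB := max (Real.log (s0max/sm)) (RM * (1 + σr / (2 * Real.exp 1 * RM))) with hUB
  have hUB0 : 0 ≤ UB := by
    apply le_trans _ (le_max_left _ _)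
    apply Real.log_nonneg
    rw [le_div_iff₀ hsm]; linarith
  set κ := UB / RM with hκ
  have hκ0 : 0 ≤ κ := div_nonneg hUB0 hRM.le
  -- a.e. upper bound for the flow of a.e. z
  have haeUB : ∀ᵐ z ∂μ0, ∀ t, 0 ≤ t → Real.log (sInf t z.1 z.2) - Real.log sm ≤ UB := by
    filter_upwards [hsupp] with z hz
    intro t ht
    have hub := mf_upper sm RM σx σr γM s0min s0max SM hsm hRM hσx hσr h1 h2 h3 h4 μ0
      hsupp sInf hflow z.1 z.2.1 z.2.2.1 z.2.2.2
      (by linarith [hz.1]) (by linarith [hz.2.2.1]) (by linarith [hz.2.2.2.1])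
      hz.2.2.2.2.1 hz.2.2.2.2.2 t ht
    have hle : max (Real.log z.1 - Real.log sm) (RM * (1 + σr / (2 * Real.exp 1 * RM))) ≤ UB := by
      apply max_le
      · apply le_trans _ (le_max_left _ _)
        rw [Real.log_div (by linarith [hz.1] : s0max ≠ 0) hsm.ne']
        have := Real.log_le_log (by linarith [hz.1] : (0:ℝ) < z.1) hz.2.1.le
        linarith
      · exact le_max_right _ _
    exact le_trans hub hle
  obtain ⟨h0, hpos, -⟩ := hflow s0 x S γ hc1 hc2 hc3 hc4 hc5
  have h0' : sInf 0 s0 (x,S,γ) = s0 := h0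
  have hL0 : 0 ≤ Real.log (S/sm) := by
    apply Real.log_nonneg; rw [le_div_iff₀ hsm]; linarith
  have hLRM : Real.log (S/sm) ≤ RM := by
    have hup : S/sm ≤ Real.exp RM := by rw [div_le_iff₀ hsm]; linarith
    have hl := Real.log_le_log (div_pos (by linarith) hsm) hup
    rwa [Real.log_exp] at hl
  have hphi : ∀ t, 0 ≤ t →
      Real.log (sInf t s0 (x,S,γ)) - Real.log sm ≤ min 0 (RM * (1 - κ)) →
      0 ≤ γ * (Real.log (S/sm) * (1 - ∫ z, pot sm RM σx σr (sInf t s0 (x,S,γ))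
            (sInf t z.1 z.2) (dist x z.2.1) ∂μ0)
        - (Real.log (sInf t s0 (x,S,γ)) - Real.log sm)) := by
    intro t ht hub
    have hK : (∫ z, pot sm RM σx σr (sInf t s0 (x,S,γ)) (sInf t z.1 z.2)
        (dist x z.2.1) ∂μ0) ≤ κ := by
      apply integral_le_const μ0 hκ0
      filter_upwards [haeUB, hsupp] with z hz hz2
      have hzpos : 0 < sInf t z.1 z.2 := by
        obtain ⟨-, hzpos', -⟩ := hflow z.1 z.2.1 z.2.2.1 z.2.2.2
          (by linarith [hz2.1]) (by linarith [hz2.2.2.1]) (by linarith [hz2.2.2.2.1])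
          hz2.2.2.2.2.1 hz2.2.2.2.2.2
        exact hzpos' t ht
      have hp := pot_upper (σr := σr) hsm hRM hσx (sInf t s0 (x,S,γ)) (sInf t z.1 z.2)
        (dist x z.2.1)
      have hlog : Real.log (sInf t z.1 z.2 / sm) ≤ UB := by
        rw [Real.log_div hzpos.ne' hsm.ne']
        exact hz t ht
      have hmax : max (Real.log (sInf t z.1 z.2 / sm)) 0 ≤ UB := max_le hlog hUB0
      calc pot sm RM σx σr (sInf t s0 (x,S,γ)) (sInf t z.1 z.2) (dist x z.2.1)
          ≤ max (Real.log (sInf t z.1 z.2 / sm)) 0 / RM := hp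
        _ ≤ UB / RM := div_le_div_of_nonneg_right hmax hRM.le
    apply mul_nonneg hc4
    rcases le_or_gt 0 (1 - ∫ z, pot sm RM σx σr (sInf t s0 (x,S,γ)) (sInf t z.1 z.2)
        (dist x z.2.1) ∂μ0) with hs | hs
    · have hls : 0 ≤ Real.log (S/sm) * (1 - ∫ z, pot sm RM σx σr (sInf t s0 (x,S,γ))
          (sInf t z.1 z.2) (dist x z.2.1) ∂μ0) := mul_nonneg hL0 hs
      have hu0 : Real.log (sInf t s0 (x,S,γ)) - Real.log sm ≤ 0 :=
        le_trans hub (min_le_left _ _)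
      linarith
    · have hls : RM * (1 - κ) ≤ Real.log (S/sm) * (1 - ∫ z, pot sm RM σx σr
          (sInf t s0 (x,S,γ)) (sInf t z.1 z.2) (dist x z.2.1) ∂μ0) := by
        have e1 : RM * (1 - ∫ z, pot sm RM σx σr (sInf t s0 (x,S,γ)) (sInf t z.1 z.2)
            (dist x z.2.1) ∂μ0) ≤ Real.log (S/sm) * (1 - ∫ z, pot sm RM σx σr
            (sInf t s0 (x,S,γ)) (sInf t z.1 z.2) (dist x z.2.1) ∂μ0) := by
          apply mul_le_mul_of_nonpos_right hLRM hs.le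
        have e2 : RM * (1 - κ) ≤ RM * (1 - ∫ z, pot sm RM σx σr (sInf t s0 (x,S,γ))
            (sInf t z.1 z.2) (dist x z.2.1) ∂μ0) := by
          apply mul_le_mul_of_nonneg_left (by linarith) hRM.le
        linarith
      have hu0 : Real.log (sInf t s0 (x,S,γ)) - Real.log sm ≤ RM * (1 - κ) :=
        le_trans hub (min_le_right _ _)
      linarith
  have key := threshold_lower
    (f := fun τ => Real.log (sInf τ s0 (x,S,γ)) - Real.log sm)
    (φ := fun t => γ * (Real.log (S/sm) * (1 - ∫ z, pot sm RM σx σr (sInf t s0 (x,S,γ))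
            (sInf t z.1 z.2) (dist x z.2.1) ∂μ0)
        - (Real.log (sInf t s0 (x,S,γ)) - Real.log sm))) (Bd := min 0 (RM * (1 - κ)))
    (flow_log_deriv sm RM σx σr γM hsm μ0 sInf hflow s0 x S γ hc1 hc2 hc3 hc4 hc5)
    hphi
  intro t ht
  have hk := key t ht
  simpa [h0'] using hk



lemma exp_integral_le_one {γ t : ℝ} (hγ : 0 ≤ γ) (ht : 0 ≤ t) :
    γ * ∫ τ in (0:ℝ)..t, Real.exp (γ*(τ-t)) ≤ 1 := by
  rcases eq_or_lt_of_le hγ with h | h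
  · rw [← h]; norm_num
  · have hderiv : ∀ x ∈ uIcc (0:ℝ) t, HasDerivAt (fun τ => Real.exp (γ*(τ-t))/γ)
        (Real.exp (γ*(x-t))) x := by
      intro x _
      have h1 : HasDerivAt (fun τ : ℝ => γ*(τ-t)) γ x := by
        simpa using ((hasDerivAt_id x).sub_const t).const_mul γ
      have h2 := (h1.exp).div_const γ
      have h3 : Real.exp (γ*(x-t)) * γ / γ = Real.exp (γ*(x-t)) := by field_simp
      rwa [h3] at h2
    have hint : IntervalIntegrable (fun x => Real.exp (γ*(x-t))) volume 0 t :=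
      Continuous.intervalIntegrable (by continuity) 0 t
    rw [integral_eq_sub_of_hasDerivAt hderiv hint]
    have hle : (0:ℝ) ≤ Real.exp (γ*(0-t)) := (Real.exp_pos _).le
    have h4 : Real.exp (γ*(t-t)) = 1 := by norm_num
    rw [h4, mul_sub, mul_div_cancel₀ _ h.ne', mul_div_cancel₀ _ h.ne']
    linarith

set_option maxHeartbeats 1000000 in
lemma main_est {t m γ1 γ2 gN cN : ℝ} {P Q : ℝ → ℝ}
    (ht : 0 ≤ t) (hm : 1 ≤ m) (hcN : cN = 1 + 1/m)
    (hγ1 : 0 ≤ γ1) (hγ2 : 0 ≤ γ2) (hgN0 : 0 ≤ gN) (hgN1 : gN ≤ γ1)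
    (hP01 : ∀ τ ∈ Icc 0 t, 0 ≤ P τ ∧ P τ ≤ 1)
    (hPint : IntervalIntegrable P volume 0 t)
    (hQint : IntervalIntegrable Q volume 0 t) :
    |gN * (∫ τ in (0:ℝ)..t, (1 - cN * P τ) * Real.exp (gN*(τ-t)))
      - γ2 * (∫ τ in (0:ℝ)..t, (1 - Q τ) * Real.exp (γ2*(τ-t)))|
    ≤ t * (γ1 - gN) + t * |γ1 - γ2| + 1/m
      + γ2 * ∫ τ in (0:ℝ)..t, |P τ - Q τ| * Real.exp (γ2*(τ-t)) := by
  have hm0 : 0 < m := lt_of_lt_of_le one_pos hm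
  have hcN1 : 1 ≤ cN := by
    rw [hcN]
    have h0 : 0 < 1/m := by positivity
    linarith
  have hcN2 : cN ≤ 2 := by
    rw [hcN]
    have : 1/m ≤ 1 := by rw [div_le_one hm0]; exact hm
    linarith
  have hENc : Continuous (fun τ => Real.exp (gN*(τ-t))) := by continuity
  have hE1c : Continuous (fun τ => Real.exp (γ1*(τ-t))) := by continuity
  have hE2c : Continuous (fun τ => Real.exp (γ2*(τ-t))) := by continuity
  have hAint : IntervalIntegrable (fun τ => 1 - cN * P τ) volume 0 t :=
    intervalIntegrable_const.sub (hPint.const_mul cN)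
  have hf1 : IntervalIntegrable (fun τ => (1 - cN*P τ) * (gN * Real.exp (gN*(τ-t))))
      volume 0 t := hAint.mul_continuousOn (continuous_const.mul hENc).continuousOn
  have hf2 : IntervalIntegrable (fun τ => (1 - cN*P τ) * (γ1 * Real.exp (γ1*(τ-t))))
      volume 0 t := hAint.mul_continuousOn (continuous_const.mul hE1c).continuousOn
  have hf3 : IntervalIntegrable (fun τ => (1 - cN*P τ) * (γ2 * Real.exp (γ2*(τ-t))))
      volume 0 t := hAint.mul_continuousOn (continuous_const.mul hE2c).continuousOn
  have hf4 : IntervalIntegrable (fun τ => (1 - Q τ) * (γ2 * Real.exp (γ2*(τ-t))))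
      volume 0 t := (intervalIntegrable_const.sub hQint).mul_continuousOn
        (continuous_const.mul hE2c).continuousOn
  have hQP : IntervalIntegrable (fun τ => (Q τ - P τ) * Real.exp (γ2*(τ-t)))
      volume 0 t := (hQint.sub hPint).mul_continuousOn hE2c.continuousOn
  have hPQa : IntervalIntegrable (fun τ => |P τ - Q τ| * Real.exp (γ2*(τ-t)))
      volume 0 t := (hPint.sub hQint).abs.mul_continuousOn hE2c.continuousOn
  have hPE2 : IntervalIntegrable (fun τ => P τ * Real.exp (γ2*(τ-t)))
      volume 0 t := hPint.mul_continuousOn hE2c.continuousOn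
  have hE2int : IntervalIntegrable (fun τ => Real.exp (γ2*(τ-t))) volume 0 t :=
    hE2c.intervalIntegrable 0 t
  -- rewrite both sides
  have e1 : gN * (∫ τ in (0:ℝ)..t, (1 - cN * P τ) * Real.exp (gN*(τ-t)))
      = ∫ τ in (0:ℝ)..t, (1 - cN*P τ) * (gN * Real.exp (gN*(τ-t))) := by
    rw [← intervalIntegral.integral_const_mul]
    apply integral_congr
    intro τ _
    ring
  have e4 : γ2 * (∫ τ in (0:ℝ)..t, (1 - Q τ) * Real.exp (γ2*(τ-t)))
      = ∫ τ in (0:ℝ)..t, (1 - Q τ) * (γ2 * Real.exp (γ2*(τ-t))) := by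
    rw [← intervalIntegral.integral_const_mul]
    apply integral_congr
    intro τ _
    ring
  set M1 := ∫ τ in (0:ℝ)..t, (1 - cN*P τ) * (γ1 * Real.exp (γ1*(τ-t))) with hM1
  set M2 := ∫ τ in (0:ℝ)..t, (1 - cN*P τ) * (γ2 * Real.exp (γ2*(τ-t))) with hM2
  -- T1
  have habsA : ∀ τ ∈ Icc (0:ℝ) t, |1 - cN * P τ| ≤ 1 := by
    intro τ hτ
    have hPp := hP01 τ hτ
    rw [abs_le]
    constructor
    · have h5 : cN * P τ ≤ cN * 1 := mul_le_mul_of_nonneg_left hPp.2 (by linarith)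
      linarith
    · have h5 : 0 ≤ cN * P τ := mul_nonneg (by linarith) hPp.1
      linarith
  have T1 : |(∫ τ in (0:ℝ)..t, (1 - cN*P τ) * (gN * Real.exp (gN*(τ-t)))) - M1|
      ≤ t * (γ1 - gN) := by
    rw [hM1, ← integral_sub hf1 hf2]
    apply le_trans (abs_integral_le_integral_abs ht)
    have hmono : ∫ τ in (0:ℝ)..t, |(1 - cN*P τ) * (gN * Real.exp (gN*(τ-t)))
        - (1 - cN*P τ) * (γ1 * Real.exp (γ1*(τ-t)))|
        ≤ ∫ _τ in (0:ℝ)..t, (γ1 - gN) := by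
      apply integral_mono_on ht (hf1.sub hf2).abs intervalIntegrable_const
      intro τ hτ
      have hd : (1 - cN*P τ) * (gN * Real.exp (gN*(τ-t)))
          - (1 - cN*P τ) * (γ1 * Real.exp (γ1*(τ-t)))
          = (1 - cN*P τ) * (gN * Real.exp (gN*(τ-t)) - γ1 * Real.exp (γ1*(τ-t))) := by ring
      rw [hd, abs_mul]
      have hg := abs_gexp_le (u := τ - t) (by linarith [hτ.2]) hgN0 hγ1
      rw [abs_of_nonpos (by linarith : gN - γ1 ≤ 0)] at hg
      calc |1 - cN*P τ| * |gN * Real.exp (gN*(τ-t)) - γ1 * Real.exp (γ1*(τ-t))|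
          ≤ 1 * (γ1 - gN) :=
            mul_le_mul (habsA τ hτ) (by linarith [hg]) (abs_nonneg _) zero_le_one
        _ = γ1 - gN := one_mul _
    rw [intervalIntegral.integral_const, smul_eq_mul, sub_zero] at hmono
    exact hmono
  have T2 : |M1 - M2| ≤ t * |γ1 - γ2| := by
    rw [hM1, hM2, ← integral_sub hf2 hf3]
    apply le_trans (abs_integral_le_integral_abs ht)
    have hmono : ∫ τ in (0:ℝ)..t, |(1 - cN*P τ) * (γ1 * Real.exp (γ1*(τ-t)))
        - (1 - cN*P τ) * (γ2 * Real.exp (γ2*(τ-t)))|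
        ≤ ∫ _τ in (0:ℝ)..t, |γ1 - γ2| := by
      apply integral_mono_on ht (hf2.sub hf3).abs intervalIntegrable_const
      intro τ hτ
      have hd : (1 - cN*P τ) * (γ1 * Real.exp (γ1*(τ-t)))
          - (1 - cN*P τ) * (γ2 * Real.exp (γ2*(τ-t)))
          = (1 - cN*P τ) * (γ1 * Real.exp (γ1*(τ-t)) - γ2 * Real.exp (γ2*(τ-t))) := by ring
      rw [hd, abs_mul]
      have hg := abs_gexp_le (u := τ - t) (by linarith [hτ.2]) hγ1 hγ2
      calc |1 - cN*P τ| * |γ1 * Real.exp (γ1*(τ-t)) - γ2 * Real.exp (γ2*(τ-t))|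
          ≤ 1 * |γ1 - γ2| :=
            mul_le_mul (habsA τ hτ) hg (abs_nonneg _) zero_le_one
        _ = |γ1 - γ2| := one_mul _
    rw [intervalIntegral.integral_const, smul_eq_mul, sub_zero] at hmono
    exact hmono
  -- T3
  have hsplit : M2 - (∫ τ in (0:ℝ)..t, (1 - Q τ) * (γ2 * Real.exp (γ2*(τ-t))))
      = γ2 * (∫ τ in (0:ℝ)..t, (Q τ - P τ) * Real.exp (γ2*(τ-t)))
        - (1/m) * (γ2 * ∫ τ in (0:ℝ)..t, P τ * Real.exp (γ2*(τ-t))) := by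
    rw [hM2, ← integral_sub hf3 hf4]
    have hcongr : ∫ τ in (0:ℝ)..t, ((1 - cN*P τ) * (γ2 * Real.exp (γ2*(τ-t)))
          - (1 - Q τ) * (γ2 * Real.exp (γ2*(τ-t))))
        = ∫ τ in (0:ℝ)..t, (γ2 * ((Q τ - P τ) * Real.exp (γ2*(τ-t)))
          - (1/m) * (γ2 * (P τ * Real.exp (γ2*(τ-t))))) := by
      apply integral_congr
      intro τ _
      rw [hcN]
      field_simp
      ring
    rw [hcongr, integral_sub (hQP.const_mul γ2) ((hPE2.const_mul γ2).const_mul (1/m)),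
      intervalIntegral.integral_const_mul, intervalIntegral.integral_const_mul,
      intervalIntegral.integral_const_mul]
  have hPE2nn : 0 ≤ ∫ τ in (0:ℝ)..t, P τ * Real.exp (γ2*(τ-t)) := by
    apply integral_nonneg ht
    intro τ hτ
    exact mul_nonneg (hP01 τ hτ).1 (Real.exp_pos _).le
  have hPE2le : γ2 * ∫ τ in (0:ℝ)..t, P τ * Real.exp (γ2*(τ-t)) ≤ 1 := by
    have hmono : ∫ τ in (0:ℝ)..t, P τ * Real.exp (γ2*(τ-t))
        ≤ ∫ τ in (0:ℝ)..t, Real.exp (γ2*(τ-t)) := by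
      apply integral_mono_on ht hPE2 hE2int
      intro τ hτ
      have := (hP01 τ hτ).2
      nlinarith [(Real.exp_pos (γ2*(τ-t))).le]
    have := exp_integral_le_one hγ2 ht
    nlinarith
  have hQPabs : |∫ τ in (0:ℝ)..t, (Q τ - P τ) * Real.exp (γ2*(τ-t))|
      ≤ ∫ τ in (0:ℝ)..t, |P τ - Q τ| * Real.exp (γ2*(τ-t)) := by
    apply le_trans (abs_integral_le_integral_abs ht)
    apply le_of_eq
    apply integral_congr
    intro τ _
    show |(Q τ - P τ) * Real.exp (γ2*(τ-t))| = |P τ - Q τ| * Real.exp (γ2*(τ-t))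
    rw [abs_mul, abs_of_pos (Real.exp_pos _), abs_sub_comm]
  have T3 : |M2 - (∫ τ in (0:ℝ)..t, (1 - Q τ) * (γ2 * Real.exp (γ2*(τ-t))))|
      ≤ 1/m + γ2 * ∫ τ in (0:ℝ)..t, |P τ - Q τ| * Real.exp (γ2*(τ-t)) := by
    rw [hsplit]
    apply le_trans (abs_sub _ _)
    have h5 : |γ2 * (∫ τ in (0:ℝ)..t, (Q τ - P τ) * Real.exp (γ2*(τ-t)))|
        ≤ γ2 * ∫ τ in (0:ℝ)..t, |P τ - Q τ| * Real.exp (γ2*(τ-t)) := by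
      rw [abs_mul, abs_of_nonneg hγ2]
      exact mul_le_mul_of_nonneg_left hQPabs hγ2
    have h6 : |(1/m) * (γ2 * ∫ τ in (0:ℝ)..t, P τ * Real.exp (γ2*(τ-t)))| ≤ 1/m := by
      rw [abs_mul, abs_of_nonneg (by positivity : (0:ℝ) ≤ 1/m),
        abs_of_nonneg (mul_nonneg hγ2 hPE2nn)]
      have h7 : (1/m) * (γ2 * ∫ τ in (0:ℝ)..t, P τ * Real.exp (γ2*(τ-t))) ≤ (1/m) * 1 :=
        mul_le_mul_of_nonneg_left hPE2le (by positivity)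
      linarith
    linarith
  -- assemble
  rw [e1, e4]
  have habc : (∫ τ in (0:ℝ)..t, (1 - cN*P τ) * (gN * Real.exp (gN*(τ-t))))
      - (∫ τ in (0:ℝ)..t, (1 - Q τ) * (γ2 * Real.exp (γ2*(τ-t))))
      = ((∫ τ in (0:ℝ)..t, (1 - cN*P τ) * (gN * Real.exp (gN*(τ-t)))) - M1)
        + ((M1 - M2)
        + (M2 - ∫ τ in (0:ℝ)..t, (1 - Q τ) * (γ2 * Real.exp (γ2*(τ-t))))) := by ring
  rw [habc]
  apply le_trans (abs_add_le _ _)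
  have h8 := abs_add_le (M1 - M2)
    (M2 - ∫ τ in (0:ℝ)..t, (1 - Q τ) * (γ2 * Real.exp (γ2*(τ-t))))
  linarith


end S18

set_option maxHeartbeats 4000000 in
/-- comparison of the empirical and mean-field accumulated competition terms. -/
theorem stmt_18 (sm RM σx σr γM s0min s0max SM : ℝ)
    (hsm : 0 < sm) (hRM : 0 < RM) (hσx : 0 < σx) (hσr : 0 < σr) (hγM : 0 < γM)
    (h1 : sm < s0min) (h2 : s0min < s0max) (h3 : s0max < SM) (h4 : SM < sm * Real.exp RM)
    (μ0 : Measure Zst) [IsProbabilityMeasure μ0]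
    (hsupp : ∀ᵐ z ∂μ0, s0min < z.1 ∧ z.1 < s0max ∧
      SM < z.2.2.1 ∧ z.2.2.1 < sm * Real.exp RM ∧ 0 ≤ z.2.2.2 ∧ z.2.2.2 ≤ γM)
    (N : ℕ) (hN : 1 < N) (cfg : Fin N → Zst)
    (hcfg : AdmissibleCfg sm RM γM s0min s0max SM cfg)
    (s : Fin N → ℝ → ℝ) (hsol : IsCompetitionSol sm RM σx σr cfg s)
    -- the empirical flow `ŝ_N`
    (shat : ℝ → ℝ → Param → ℝ)
    (hshat : ∀ (s1 : ℝ) (θ : Param),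
      s0min < s1 → s1 < s0max → SM < θ.2.1 → θ.2.1 < sm * Real.exp RM →
      0 ≤ θ.2.2 → θ.2.2 ≤ γM →
      shat 0 s1 θ = s1 ∧ ∀ t, 0 ≤ t →
        HasDerivWithinAt (fun τ => shat τ s1 θ)
          (θ.2.2 * shat t s1 θ * (Real.log (θ.2.1 / sm) *
              (1 - hatC sm RM σx σr N (shat t s1 θ) θ.1 (empCfg cfg s t))
            - Real.log (shat t s1 θ / sm)))
          (Set.Ici 0) t)
    -- the mean-field flow `s_∞` and distribution `μ_∞`
    (sInf : ℝ → ℝ → Param → ℝ)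
    (hflow : IsMeanFieldFlow sm RM σx σr γM μ0 (fun t s0 x S γ => sInf t s0 (x, S, γ)))
    (hmeasflow : ∀ t, Measurable (fun z : Zst => (sInf t z.1 z.2, z.2))) :
    ∀ (s1 : ℝ) (θ1 : Param),
      s0min < s1 → s1 < s0max → SM < θ1.2.1 → θ1.2.1 < sm * Real.exp RM →
      0 ≤ θ1.2.2 → θ1.2.2 ≤ γM →
    ∀ (s2 : ℝ) (θ2 : Param),
      s0min < s2 → s2 < s0max → SM < θ2.2.1 → θ2.2.1 < sm * Real.exp RM →
      0 ≤ θ2.2.2 → θ2.2.2 ≤ γM →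
    ∀ t, 0 ≤ t →
      |accCompN sm RM σx σr N (empCfg cfg s) shat t s1 θ1
          - accCompInf sm RM σx σr
              (fun τ => Measure.map (fun z : Zst => (sInf τ z.1 z.2, z.2)) μ0)
              sInf t s2 θ2|
        ≤ θ1.2.2 * t * Real.log (θ1.2.1 / sm) / (2 * RM * ((N : ℝ) - 1))
          + t * |θ1.2.2 - θ2.2.2| + 1 / ((N : ℝ) - 1)
          + θ2.2.2 * ∫ τ in (0:ℝ)..t,
              |(∫ z, pot sm RM σx σr (shat τ s1 θ1) z.1 (dist θ1.1 z.2.1)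
                  ∂(empCfg cfg s τ))
                - ∫ z, pot sm RM σx σr (sInf τ s2 θ2) z.1 (dist θ2.1 z.2.1)
                    ∂(Measure.map (fun z : Zst => (sInf τ z.1 z.2, z.2)) μ0)| *
                Real.exp (θ2.2.2 * (τ - t)) := by
  intro s1 θ1 h11 h12 h13 h14 h15 h16 s2 θ2 h21 h22 h23 h24 h25 h26 t ht
  have hN1 : (1:ℝ) < (N:ℝ) := by exact_mod_cast hN
  have hN2 : (2:ℝ) ≤ (N:ℝ) := by exact_mod_cast hN
  have hNm1 : (0:ℝ) < (N:ℝ) - 1 := by linarith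
  have hNm1' : (1:ℝ) ≤ (N:ℝ) - 1 := by linarith
  -- basic positivity
  have hs1pos : 0 < s1 := by linarith
  have hs2pos : 0 < s2 := by linarith
  have hexppos := Real.exp_pos 1
  -- L1 bounds
  have hL1pos : 0 < Real.log (θ1.2.1 / sm) := by
    apply Real.log_pos
    rw [lt_div_iff₀ hsm]; nlinarith
  have hL1RM : Real.log (θ1.2.1 / sm) ≤ RM := by
    have hup : θ1.2.1/sm ≤ Real.exp RM := by rw [div_le_iff₀ hsm]; nlinarith
    have hl := Real.log_le_log (div_pos (by nlinarith) hsm) hup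
    rwa [Real.log_exp] at hl
  -- gammaN bounds
  have hfrac : Real.log (θ1.2.1 / sm) / (2 * ((N:ℝ) - 1) * RM) ≤ 1/2 := by
    rw [div_le_iff₀ (by positivity)]
    nlinarith
  have hfrac0 : 0 ≤ Real.log (θ1.2.1 / sm) / (2 * ((N:ℝ) - 1) * RM) := by positivity
  have hgN0 : 0 ≤ gammaN sm RM N θ1 := by
    rw [gammaN]
    apply mul_nonneg h15
    linarith
  have hgN1 : gammaN sm RM N θ1 ≤ θ1.2.2 := by
    rw [gammaN]
    nlinarith [h15]
  -- particle invariance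
  have hbox := S18.particle_invariance sm RM σx σr γM s0min s0max SM hsm hRM hσx hσr
    h1 h2 h3 h4 hN cfg hcfg s hsol
  have hscont : ∀ j, ContinuousOn (s j) (Ici 0) :=
    fun j x hx => (((hsol j).2) x hx).continuousWithinAt
  -- shat continuity
  obtain ⟨hshat0, hshatode⟩ := hshat s1 θ1 h11 h12 h13 h14 h15 h16
  have hshatcont : ContinuousOn (fun τ => shat τ s1 θ1) (Ici 0) :=
    fun x hx => (hshatode x hx).continuousWithinAt
  -- P : the empirical competition integral
  have hPeq : ∀ τ, (∫ z, pot sm RM σx σr (shat τ s1 θ1) z.1 (dist θ1.1 z.2.1)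
      ∂(empCfg cfg s τ))
      = (N:ℝ)⁻¹ * ∑ j, pot sm RM σx σr (shat τ s1 θ1) (s j τ) (dist θ1.1 (cfg j).2.1) :=
    fun τ => S18.emp_integral (by omega) cfg s τ _
      (S18.pot_meas_z sm RM σx σr (shat τ s1 θ1) θ1.1)
  have hP01 : ∀ τ ∈ Icc 0 t, 0 ≤ (∫ z, pot sm RM σx σr (shat τ s1 θ1) z.1
      (dist θ1.1 z.2.1) ∂(empCfg cfg s τ)) ∧
      (∫ z, pot sm RM σx σr (shat τ s1 θ1) z.1 (dist θ1.1 z.2.1) ∂(empCfg cfg s τ)) ≤ 1 := by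
    intro τ hτ
    rw [hPeq τ]
    have hbnd : ∀ j : Fin N, 0 ≤ pot sm RM σx σr (shat τ s1 θ1) (s j τ)
        (dist θ1.1 (cfg j).2.1) ∧
        pot sm RM σx σr (shat τ s1 θ1) (s j τ) (dist θ1.1 (cfg j).2.1) ≤ 1 := by
      intro j
      have hb := hbox τ hτ.1 j
      exact ⟨S18.pot_nonneg hsm hRM hσx hb.1.le, S18.pot_le_one hsm hRM hσx hb.1.le hb.2.le⟩
    constructor
    · apply mul_nonneg (by positivity)
      exact Finset.sum_nonneg (fun j _ => (hbnd j).1)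
    · have hsum : ∑ j, pot sm RM σx σr (shat τ s1 θ1) (s j τ) (dist θ1.1 (cfg j).2.1)
          ≤ (N:ℝ) := by
        have := Finset.sum_le_sum (fun j (_ : j ∈ Finset.univ) => (hbnd j).2)
        simpa using this
      have hNpos : (0:ℝ) < (N:ℝ) := by linarith
      rw [← mul_le_mul_iff_right₀ hNpos, ← mul_assoc, mul_inv_cancel₀ hNpos.ne', one_mul, mul_one]
      exact hsum
  have hPint : IntervalIntegrable (fun τ => ∫ z, pot sm RM σx σr (shat τ s1 θ1) z.1
      (dist θ1.1 z.2.1) ∂(empCfg cfg s τ)) volume 0 t := by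
    rw [intervalIntegrable_iff_integrableOn_Ioc_of_le ht]
    have hIoc : Ioc (0:ℝ) t ⊆ Ici 0 := fun x hx => hx.1.le
    have hsh : AEMeasurable (fun τ => shat τ s1 θ1) (volume.restrict (Ioc 0 t)) :=
      (hshatcont.mono hIoc).aemeasurable measurableSet_Ioc
    have hmeas : AEMeasurable (fun τ => ∫ z, pot sm RM σx σr (shat τ s1 θ1) z.1
        (dist θ1.1 z.2.1) ∂(empCfg cfg s τ)) (volume.restrict (Ioc 0 t)) := by
      have heq : (fun τ => ∫ z, pot sm RM σx σr (shat τ s1 θ1) z.1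
          (dist θ1.1 z.2.1) ∂(empCfg cfg s τ))
          = fun τ => (N:ℝ)⁻¹ * ∑ j, pot sm RM σx σr (shat τ s1 θ1) (s j τ)
            (dist θ1.1 (cfg j).2.1) := funext hPeq
      rw [heq]
      apply AEMeasurable.const_mul
      apply Finset.aemeasurable_fun_sum
      intro j _
      have hsj : AEMeasurable (s j) (volume.restrict (Ioc 0 t)) :=
        ((hscont j).mono hIoc).aemeasurable measurableSet_Ioc
      show AEMeasurable (fun τ => Real.log (s j τ / sm) /
          (2 * RM * (1 + dist θ1.1 (cfg j).2.1 ^ 2 / σx ^ 2)) *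
          (1 + Real.tanh (Real.log (s j τ / shat τ s1 θ1) / σr)))
        (volume.restrict (Ioc 0 t))
      apply AEMeasurable.mul
      · exact (Real.measurable_log.comp_aemeasurable (hsj.div_const sm)).div_const _
      · apply AEMeasurable.const_add
        exact S18.cont_tanh.measurable.comp_aemeasurable
          ((Real.measurable_log.comp_aemeasurable (hsj.div hsh)).div_const σr)
    apply Integrable.mono' (integrable_const (1:ℝ)) hmeas.aestronglyMeasurable
    filter_upwards [ae_restrict_mem measurableSet_Ioc] with τ hτ
    have h01 := hP01 τ ⟨hτ.1.le, hτ.2⟩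
    rw [Real.norm_eq_abs, abs_le]
    exact ⟨by linarith [h01.1], h01.2⟩
  -- flow conditions for (s2, θ2) and a.e. bounds
  have hθ2c : sm ≤ θ2.2.1 := by nlinarith
  have hflow2 := hflow s2 θ2.1 θ2.2.1 θ2.2.2 hs2pos hθ2c h24.le h25 h26
  have hflow2pos : ∀ τ, 0 ≤ τ → 0 < sInf τ s2 θ2 := hflow2.2.1
  have hsflowcont : ContinuousOn (fun τ => sInf τ s2 θ2) (Ici 0) :=
    fun x hx => (hflow2.2.2 x hx).continuousWithinAt
  -- a.e. two-sided bound on the flow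
  set UB := max (Real.log (s0max/sm)) (RM * (1 + σr / (2 * Real.exp 1 * RM))) with hUBdef
  have hUB0 : 0 ≤ UB := by
    apply le_trans _ (le_max_left _ _)
    apply Real.log_nonneg
    rw [le_div_iff₀ hsm]; linarith
  set LB := min (Real.log s0min - Real.log sm) (min 0 (RM * (1 - UB/RM))) with hLBdef
  set M0 := max UB (-LB) with hM0def
  have hM00 : 0 ≤ M0 := le_trans hUB0 (le_max_left _ _)
  have haebound : ∀ᵐ z ∂μ0, ∀ τ, 0 ≤ τ → 0 < sInf τ z.1 z.2 ∧
      |Real.log (sInf τ z.1 z.2 / sm)| ≤ M0 := by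
    filter_upwards [hsupp] with z hz
    intro τ hτ
    have hz1 : 0 < z.1 := by linarith [hz.1]
    have hzSm : sm ≤ z.2.2.1 := by nlinarith [hz.2.2.1]
    have hzeta : (z.2.1, z.2.2.1, z.2.2.2) = z.2 := rfl
    have hup := S18.mf_upper sm RM σx σr γM s0min s0max SM hsm hRM hσx hσr h1 h2 h3 h4 μ0
      hsupp sInf hflow z.1 z.2.1 z.2.2.1 z.2.2.2 hz1 hzSm hz.2.2.2.1.le
      hz.2.2.2.2.1 hz.2.2.2.2.2 τ hτ
    have hlo := S18.mf_lower sm RM σx σr γM s0min s0max SM hsm hRM hσx hσr h1 h2 h3 h4 μ0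
      hsupp sInf hflow z.1 z.2.1 z.2.2.1 z.2.2.2 hz1 hzSm hz.2.2.2.1.le
      hz.2.2.2.2.1 hz.2.2.2.2.2 τ hτ
    rw [hzeta] at hup hlo
    have hposz : 0 < sInf τ z.1 z.2 :=
      (hflow z.1 z.2.1 z.2.2.1 z.2.2.2 hz1 hzSm hz.2.2.2.1.le
        hz.2.2.2.2.1 hz.2.2.2.2.2).2.1 τ hτ
    refine ⟨hposz, ?_⟩
    rw [Real.log_div hposz.ne' hsm.ne', abs_le]
    constructor
    · -- lower
      have hmono : min (Real.log z.1 - Real.log sm) (min 0 (RM * (1 - UB/RM))) ≥ LB := by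
        apply le_min _ (min_le_right _ _)
        have : Real.log s0min ≤ Real.log z.1 := Real.log_le_log (by linarith) hz.1.le
        calc LB ≤ Real.log s0min - Real.log sm := min_le_left _ _
          _ ≤ Real.log z.1 - Real.log sm := by linarith
      have hLBle : -M0 ≤ LB := by
        rw [hM0def]
        have := le_max_right UB (-LB)
        linarith
      linarith
    · -- upper
      have hmono : max (Real.log z.1 - Real.log sm) (RM * (1 + σr / (2 * Real.exp 1 * RM)))
          ≤ UB := by
        apply max_le _ (le_max_right _ _)
        apply le_trans _ (le_max_left _ _)
        rw [Real.log_div (by linarith : s0max ≠ 0) hsm.ne']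
        have : Real.log z.1 ≤ Real.log s0max := Real.log_le_log hz1 hz.2.1.le
        linarith
      have : UB ≤ M0 := le_max_left _ _
      linarith
  set Mpot := M0 / RM with hMpotdef
  have hMpot0 : 0 ≤ Mpot := by positivity
  -- Q rewriting and bounds
  have hQrw : ∀ τ, (∫ z, pot sm RM σx σr (sInf τ s2 θ2) z.1 (dist θ2.1 z.2.1)
      ∂(Measure.map (fun z : Zst => (sInf τ z.1 z.2, z.2)) μ0))
      = ∫ z, pot sm RM σx σr (sInf τ s2 θ2) (sInf τ z.1 z.2) (dist θ2.1 z.2.1) ∂μ0 :=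
    fun τ => integral_map (hmeasflow τ).aemeasurable
      (S18.pot_meas_z sm RM σx σr (sInf τ s2 θ2) θ2.1).aestronglyMeasurable
  have hQcont : ContinuousOn (fun τ => ∫ z, pot sm RM σx σr (sInf τ s2 θ2) z.1
      (dist θ2.1 z.2.1) ∂(Measure.map (fun z : Zst => (sInf τ z.1 z.2, z.2)) μ0))
      (Icc 0 t) := by
    have heq : (fun τ => ∫ z, pot sm RM σx σr (sInf τ s2 θ2) z.1
        (dist θ2.1 z.2.1) ∂(Measure.map (fun z : Zst => (sInf τ z.1 z.2, z.2)) μ0))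
        = fun τ => ∫ z, pot sm RM σx σr (sInf τ s2 θ2) (sInf τ z.1 z.2)
          (dist θ2.1 z.2.1) ∂μ0 := funext hQrw
    rw [heq]
    intro τ₀ hτ₀
    apply continuousWithinAt_of_dominated (bound := fun _ => Mpot)
    · filter_upwards [self_mem_nhdsWithin] with τ _
      exact ((S18.pot_meas_z sm RM σx σr (sInf τ s2 θ2) θ2.1).comp
        (hmeasflow τ)).aestronglyMeasurable
    · filter_upwards [self_mem_nhdsWithin] with τ hτ
      filter_upwards [haebound] with z hz
      rw [Real.norm_eq_abs]
      calc |pot sm RM σx σr (sInf τ s2 θ2) (sInf τ z.1 z.2) (dist θ2.1 z.2.1)|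
          ≤ |Real.log (sInf τ z.1 z.2 / sm)| / RM :=
            S18.pot_abs_le hsm hRM hσx _ _ _
        _ ≤ Mpot := div_le_div_of_nonneg_right (hz τ hτ.1).2 hRM.le
    · exact integrable_const Mpot
    · filter_upwards [haebound, hsupp] with z hz hz2
      have hz1 : 0 < z.1 := by linarith [hz2.1]
      have hzSm : sm ≤ z.2.2.1 := by nlinarith [hz2.2.2.1]
      have hzeta : (z.2.1, z.2.2.1, z.2.2.2) = z.2 := rfl
      have hc1 : ContinuousWithinAt (fun τ => sInf τ z.1 z.2) (Icc 0 t) τ₀ :=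
        (((hflow z.1 z.2.1 z.2.2.1 z.2.2.2 hz1 hzSm hz2.2.2.2.1.le
          hz2.2.2.2.2.1 hz2.2.2.2.2.2).2.2 τ₀ hτ₀.1).continuousWithinAt).mono
          (fun x hx => hx.1)
      have hc2 : ContinuousWithinAt (fun τ => sInf τ s2 θ2) (Icc 0 t) τ₀ :=
        (hsflowcont τ₀ hτ₀.1).mono (fun x hx => hx.1)
      have hp1 : 0 < sInf τ₀ z.1 z.2 := (hz τ₀ hτ₀.1).1
      have hp2 : 0 < sInf τ₀ s2 θ2 := hflow2pos τ₀ hτ₀.1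
      show ContinuousWithinAt (fun τ => Real.log (sInf τ z.1 z.2 / sm) /
          (2 * RM * (1 + dist θ2.1 z.2.1 ^ 2 / σx ^ 2)) *
          (1 + Real.tanh (Real.log (sInf τ z.1 z.2 / sInf τ s2 θ2) / σr))) (Icc 0 t) τ₀
      apply ContinuousWithinAt.mul
      · apply ContinuousWithinAt.div_const
        exact (Real.continuousAt_log (by positivity)).comp_continuousWithinAt
          (hc1.div_const sm)
      · apply ContinuousWithinAt.add continuousWithinAt_const
        apply (S18.cont_tanh.continuousAt).comp_continuousWithinAt
        apply ContinuousWithinAt.div_const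
        exact (Real.continuousAt_log (by positivity)).comp_continuousWithinAt
          (hc1.div hc2 hp2.ne')
  have hQint : IntervalIntegrable (fun τ => ∫ z, pot sm RM σx σr (sInf τ s2 θ2) z.1
      (dist θ2.1 z.2.1) ∂(Measure.map (fun z : Zst => (sInf τ z.1 z.2, z.2)) μ0))
      volume 0 t := by
    apply ContinuousOn.intervalIntegrable
    rwa [uIcc_of_le ht]
  -- main estimate
  have hcNeq : (N:ℝ)/((N:ℝ)-1) = 1 + 1/((N:ℝ)-1) := by field_simp; ring
  have key := S18.main_est (t := t) (m := (N:ℝ)-1) (γ1 := θ1.2.2) (γ2 := θ2.2.2)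
    (gN := gammaN sm RM N θ1) (cN := (N:ℝ)/((N:ℝ)-1))
    (P := fun τ => ∫ z, pot sm RM σx σr (shat τ s1 θ1) z.1 (dist θ1.1 z.2.1)
      ∂(empCfg cfg s τ))
    (Q := fun τ => ∫ z, pot sm RM σx σr (sInf τ s2 θ2) z.1 (dist θ2.1 z.2.1)
      ∂(Measure.map (fun z : Zst => (sInf τ z.1 z.2, z.2)) μ0))
    ht hNm1' hcNeq h15 h25 hgN0 hgN1 hP01 hPint hQint
  have hRHS1 : t * (θ1.2.2 - gammaN sm RM N θ1)
      = θ1.2.2 * t * Real.log (θ1.2.1 / sm) / (2 * RM * ((N:ℝ) - 1)) := by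
    rw [gammaN]
    field_simp
    ring
  calc |accCompN sm RM σx σr N (empCfg cfg s) shat t s1 θ1
      - accCompInf sm RM σx σr
          (fun τ => Measure.map (fun z : Zst => (sInf τ z.1 z.2, z.2)) μ0) sInf t s2 θ2|
      ≤ t * (θ1.2.2 - gammaN sm RM N θ1) + t * |θ1.2.2 - θ2.2.2| + 1/((N:ℝ)-1)
        + θ2.2.2 * ∫ τ in (0:ℝ)..t,
          |(∫ z, pot sm RM σx σr (shat τ s1 θ1) z.1 (dist θ1.1 z.2.1) ∂(empCfg cfg s τ))
            - ∫ z, pot sm RM σx σr (sInf τ s2 θ2) z.1 (dist θ2.1 z.2.1)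
              ∂(Measure.map (fun z : Zst => (sInf τ z.1 z.2, z.2)) μ0)| *
          Real.exp (θ2.2.2 * (τ - t)) := key
    _ = _ := by rw [hRHS1]
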